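/- arXiv:math/0602305 — 14 statements merged into one kernel-verified Lean document; each statement's English description precedes it below -/
import Mathlib

section
/- Let m ≥ 2 be an integer and let t_0 < t_1 < ⋯ < t_{m+1} be real numbers. Then 1 + 2·(Σ_{1≤r<s≤m} (t_r − t_s)²) / ((m−1)(t_m − t_0)(t_{m+1} − t_1)) ≤ ⌊(m+4)/2⌋. Equivalently, writing θ̄^{(2)} = (1/(m²(m−1))) Σ_{1≤r<s≤m} (t_r − t_s)², Δθ' = (t_m − t_0)/m and Δθ'' = (t_{m+1} − t_1)/m, one has 1 + 2 θ̄^{(2)}/(Δθ' Δθ'') ≤ ⌊(m+4)/2⌋. -/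
open Finset

/-- Theorem 1 of the paper (analytic content): for a window of `m+2` strictly
increasing knots `t 0 < t 1 < ⋯ < t (m+1)`, one has
`1 + 2 θ̄⁽²⁾ / (Δθ' Δθ'') ≤ ⌊(m+4)/2⌋`. -/
theorem stmt_0 (m : ℕ) (hm : 2 ≤ m) (t : ℕ → ℝ)
    (ht : ∀ j, j ≤ m → t j < t (j + 1)) :
    1 + 2 * (∑ r ∈ Finset.Icc 1 m, ∑ s ∈ Finset.Icc 1 m,
        if r < s then (t r - t s) ^ 2 else 0) /
      (((m : ℝ) - 1) * (t m - t 0) * (t (m + 1) - t 1))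
    ≤ (((m + 4) / 2 : ℕ) : ℝ) := by
  -- monotonicity
  have mono : ∀ i j : ℕ, i ≤ j → j ≤ m + 1 → t i ≤ t j := by
    intro i j
    induction j with
    | zero => intro h _; simp [Nat.le_zero.mp h]
    | succ n ih =>
      intro hij hj
      rcases Nat.lt_or_ge i (n + 1) with h | h
      · exact (ih (by omega) (by omega)).trans (ht n (by omega)).le
      · exact le_of_eq (by rw [show i = n + 1 by omega])
  set d : ℕ → ℝ := fun i => t (i + 1) - t i with hd
  have hdnn : ∀ i, i ≤ m → 0 ≤ d i := fun i hi => sub_nonneg.mpr (ht i hi).le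
  have tele : ∀ r s : ℕ, r ≤ s → ∑ i ∈ Ico r s, d i = t s - t r := by
    intro r s hrs
    rw [Finset.sum_Ico_eq_sum_range]
    have h2 := Finset.sum_range_sub (fun i => t (r + i)) (s - r)
    beta_reduce at h2
    rw [show r + (s - r) = s by omega, show r + 0 = r by omega] at h2
    exact h2
  have h1m : t 1 < t m := by
    have h := ht (m - 1) (by omega)
    rw [show m - 1 + 1 = m by omega] at h
    exact lt_of_le_of_lt (mono 1 (m - 1) (by omega) (by omega)) h
  have hL : (0:ℝ) < t m - t 1 := by linarith
  have hD1 : (0:ℝ) < t m - t 0 := by have := ht 0 (by omega); linarith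
  have hD2 : (0:ℝ) < t (m + 1) - t 1 := by have := ht m le_rfl; linarith
  have hLD1 : t m - t 1 ≤ t m - t 0 := by have := ht 0 (by omega); linarith
  have hLD2 : t m - t 1 ≤ t (m + 1) - t 1 := by have := ht m le_rfl; linarith
  set C : ℕ := m ^ 2 / 4 with hCdef
  have hC : ∀ i : ℕ, i * (m - i) ≤ C := by
    intro i
    rcases le_or_gt i m with h | h
    · rw [hCdef, Nat.le_div_iff_mul_le (by norm_num)]
      obtain ⟨k, rfl⟩ := Nat.exists_eq_add_of_le h
      rw [Nat.add_sub_cancel_left]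
      nlinarith [two_mul_le_add_sq i k]
    · simp [Nat.sub_eq_zero_of_le h.le]
  have hT : (∑ r ∈ Icc 1 m, ∑ s ∈ Icc 1 m, if r < s then (t s - t r) else 0)
      = ∑ i ∈ Ico 1 m, ((i * (m - i) : ℕ) : ℝ) * d i := by
    have step1 : ∀ r ∈ Icc 1 m, ∀ s ∈ Icc 1 m,
        (if r < s then (t s - t r) else 0)
        = ∑ i ∈ Ico 1 m, ((if r ≤ i then (1:ℝ) else 0) * (if i < s then d i else 0)) := by
      intro r hr s hs
      simp only [mem_Icc] at hr hs
      have key : ∀ i, (if r ≤ i then (1:ℝ) else 0) * (if i < s then d i else 0)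
          = if i ∈ Ico r s then d i else 0 := by
        intro i
        by_cases h1 : r ≤ i <;> by_cases h2 : i < s <;>
          simp [h1, h2, Finset.mem_Ico]
      rw [Finset.sum_congr rfl (fun i _ => key i), Finset.sum_ite_mem,
        Finset.Ico_inter_Ico]
      by_cases hrs : r < s
      · rw [show max 1 r = r by omega, show min m s = s by omega, tele r s hrs.le,
          if_pos hrs]
      · rw [if_neg hrs, show min m s = s by omega,
          Finset.Ico_eq_empty (by omega), Finset.sum_empty]
    calc (∑ r ∈ Icc 1 m, ∑ s ∈ Icc 1 m, if r < s then (t s - t r) else 0)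
        = ∑ r ∈ Icc 1 m, ∑ s ∈ Icc 1 m, ∑ i ∈ Ico 1 m,
            ((if r ≤ i then (1:ℝ) else 0) * (if i < s then d i else 0)) :=
          Finset.sum_congr rfl fun r hr => Finset.sum_congr rfl fun s hs => step1 r hr s hs
      _ = ∑ r ∈ Icc 1 m, ∑ i ∈ Ico 1 m, ∑ s ∈ Icc 1 m,
            ((if r ≤ i then (1:ℝ) else 0) * (if i < s then d i else 0)) :=
          Finset.sum_congr rfl fun r _ => Finset.sum_comm
      _ = ∑ i ∈ Ico 1 m, ∑ r ∈ Icc 1 m, ∑ s ∈ Icc 1 m,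
            ((if r ≤ i then (1:ℝ) else 0) * (if i < s then d i else 0)) :=
          Finset.sum_comm
      _ = ∑ i ∈ Ico 1 m, ((∑ r ∈ Icc 1 m, if r ≤ i then (1:ℝ) else 0)
            * (∑ s ∈ Icc 1 m, if i < s then d i else 0)) := by
          refine Finset.sum_congr rfl fun i _ => ?_
          rw [Finset.sum_mul_sum]
      _ = ∑ i ∈ Ico 1 m, ((i * (m - i) : ℕ) : ℝ) * d i := by
          refine Finset.sum_congr rfl fun i hi => ?_
          simp only [mem_Ico] at hi
          have h1 : (∑ r ∈ Icc 1 m, if r ≤ i then (1:ℝ) else 0) = (i : ℝ) := by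
            rw [Finset.sum_boole]
            norm_num
            rw [show (Icc 1 m).filter (fun r => r ≤ i) = Icc 1 i by
              ext x; simp only [mem_filter, mem_Icc]; omega]
            rw [Nat.card_Icc]
            omega
          have h2 : (∑ s ∈ Icc 1 m, if i < s then d i else 0) = ((m - i : ℕ) : ℝ) * d i := by
            have key2 : ∀ s, (if i < s then d i else 0) = (if i < s then (1:ℝ) else 0) * d i := by
              intro s; by_cases h : i < s <;> simp [h]
            rw [Finset.sum_congr rfl fun s _ => key2 s, ← Finset.sum_mul, Finset.sum_boole]
            congr 2
            rw [show (Icc 1 m).filter (fun s => i < s) = Icc (i + 1) m by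
              ext x; simp only [mem_filter, mem_Icc]; omega]
            rw [Nat.card_Icc]
            omega
          rw [h1, h2]
          push_cast
          ring
  have hTle : (∑ r ∈ Icc 1 m, ∑ s ∈ Icc 1 m, if r < s then (t s - t r) else 0)
      ≤ (C : ℝ) * (t m - t 1) := by
    rw [hT, ← tele 1 m (by omega), Finset.mul_sum]
    refine Finset.sum_le_sum fun i hi => ?_
    simp only [mem_Ico] at hi
    exact mul_le_mul_of_nonneg_right (by exact_mod_cast hC i) (hdnn i (by omega))
  have hS : (∑ r ∈ Icc 1 m, ∑ s ∈ Icc 1 m, if r < s then (t r - t s) ^ 2 else 0)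
      ≤ (C : ℝ) * ((t m - t 1) * (t m - t 1)) := by
    calc (∑ r ∈ Icc 1 m, ∑ s ∈ Icc 1 m, if r < s then (t r - t s) ^ 2 else 0)
        ≤ ∑ r ∈ Icc 1 m, ∑ s ∈ Icc 1 m, (t m - t 1) * (if r < s then (t s - t r) else 0) := by
          refine Finset.sum_le_sum fun r hr => Finset.sum_le_sum fun s hs => ?_
          simp only [mem_Icc] at hr hs
          by_cases h : r < s
          · simp only [if_pos h]
            have h1 : 0 ≤ t s - t r := sub_nonneg.mpr (mono r s h.le (by omega))
            have h2 : t s - t r ≤ t m - t 1 := by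
              have := mono 1 r (by omega) (by omega)
              have := mono s m (by omega) (by omega)
              linarith
            have h3 : (t r - t s) ^ 2 = (t s - t r) * (t s - t r) := by ring
            rw [h3]
            exact mul_le_mul_of_nonneg_right h2 h1
          · simp [h]
      _ = (t m - t 1) * ∑ r ∈ Icc 1 m, ∑ s ∈ Icc 1 m, (if r < s then (t s - t r) else 0) := by
          rw [Finset.mul_sum]
          exact Finset.sum_congr rfl fun r _ => (Finset.mul_sum _ _ _).symm
      _ ≤ (t m - t 1) * ((C : ℝ) * (t m - t 1)) := mul_le_mul_of_nonneg_left hTle hL.le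
      _ = (C : ℝ) * ((t m - t 1) * (t m - t 1)) := by ring
  -- arithmetic: 2C ≤ (F - 1)(m - 1)
  set F : ℕ := (m + 4) / 2 with hFdef
  have hF1 : (1:ℝ) ≤ (F : ℝ) := by
    have : 1 ≤ F := by omega
    exact_mod_cast this
  have hm1 : (1:ℝ) ≤ (m : ℝ) - 1 := by
    have : (2:ℝ) ≤ (m : ℝ) := by exact_mod_cast hm
    linarith
  have hFkey : 2 * (C : ℝ) ≤ ((F : ℝ) - 1) * ((m : ℝ) - 1) := by
    rcases Nat.even_or_odd m with ⟨k, hk⟩ | ⟨k, hk⟩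
    · have hk1 : 1 ≤ k := by omega
      have hC4 : C = k * k := by
        rw [hCdef, hk, show (k + k) ^ 2 = 4 * (k * k) by ring,
          Nat.mul_div_cancel_left _ (by norm_num)]
      have hF2 : F = k + 2 := by rw [hFdef]; omega
      rw [hC4, hF2, hk]
      have hk1' : (1:ℝ) ≤ (k : ℝ) := by exact_mod_cast hk1
      push_cast
      nlinarith
    · have hk1 : 1 ≤ k := by omega
      have hC4 : C = k * k + k := by
        rw [hCdef, hk, show (2 * k + 1) ^ 2 = 4 * (k * k + k) + 1 by ring,
          Nat.mul_add_div (by norm_num)]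
        norm_num
      have hF2 : F = k + 2 := by rw [hFdef]; omega
      rw [hC4, hF2, hk]
      push_cast
      nlinarith
  -- final assembly
  have hQ : 0 < ((m : ℝ) - 1) * (t m - t 0) * (t (m + 1) - t 1) := by
    have : (0:ℝ) < (m : ℝ) - 1 := by linarith
    positivity
  have hL2 : (t m - t 1) * (t m - t 1) ≤ (t m - t 0) * (t (m + 1) - t 1) :=
    mul_le_mul hLD1 hLD2 hL.le (by linarith)
  have hmain : 2 * (∑ r ∈ Icc 1 m, ∑ s ∈ Icc 1 m, if r < s then (t r - t s) ^ 2 else 0)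
      ≤ ((F : ℝ) - 1) * (((m : ℝ) - 1) * (t m - t 0) * (t (m + 1) - t 1)) := by
    calc 2 * (∑ r ∈ Icc 1 m, ∑ s ∈ Icc 1 m, if r < s then (t r - t s) ^ 2 else 0)
        ≤ 2 * ((C : ℝ) * ((t m - t 1) * (t m - t 1))) := by linarith
      _ = (2 * (C : ℝ)) * ((t m - t 1) * (t m - t 1)) := by ring
      _ ≤ (((F : ℝ) - 1) * ((m : ℝ) - 1)) * ((t m - t 0) * (t (m + 1) - t 1)) := by
          exact mul_le_mul hFkey hL2 (by positivity) (mul_nonneg (by linarith) (by linarith))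
      _ = ((F : ℝ) - 1) * (((m : ℝ) - 1) * (t m - t 0) * (t (m + 1) - t 1)) := by ring
  have : 2 * (∑ r ∈ Icc 1 m, ∑ s ∈ Icc 1 m, if r < s then (t r - t s) ^ 2 else 0)
      / (((m : ℝ) - 1) * (t m - t 0) * (t (m + 1) - t 1)) ≤ (F : ℝ) - 1 := by
    rw [div_le_iff₀ hQ]
    exact hmain
  linarith
end

section
/- Let k ≥ 1 be an integer, m = 2k+1, and let t_1 < t_2 < ⋯ < t_m be real numbers. Then for every integer p with 1 ≤ p ≤ k, Σ_{r=1}^{m−p} (t_{r+p} − t_r)² + Σ_{r=1}^{p} (t_{r+m−p} − t_r)² ≤ 2p (t_m − t_1)². -/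
/-- Auxiliary inequality from the proof of Theorem 1: for `m = 2k+1` strictly
increasing knots `t 1 < ⋯ < t m` and `1 ≤ p ≤ k`,
`S_p + S'_p ≤ 2 p (t m - t 1)²`. -/
theorem stmt_1 (k : ℕ) (hk : 1 ≤ k) (m : ℕ) (hm : m = 2 * k + 1) (t : ℕ → ℝ)
    (ht : ∀ j, 1 ≤ j → j < m → t j < t (j + 1))
    (p : ℕ) (hp1 : 1 ≤ p) (hpk : p ≤ k) :
    (∑ r ∈ Finset.Icc 1 (m - p), (t (r + p) - t r) ^ 2)
      + (∑ r ∈ Finset.Icc 1 p, (t (r + (m - p)) - t r) ^ 2)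
    ≤ 2 * p * (t m - t 1) ^ 2 := by
  have hpm : p ≤ m := by omega
  have mono : ∀ j i, 1 ≤ i → i ≤ j → j ≤ m → t i ≤ t j := by
    intro j
    induction j with
    | zero => intro i h1 h2 _; omega
    | succ n ih =>
      intro i h1 h2 h3
      rcases eq_or_lt_of_le h2 with h | h
      · rw [h]
      · have hin : i ≤ n := by omega
        have h4 := ih i h1 hin (by omega)
        have h5 : t n < t (n + 1) := ht n (by omega) (by omega)
        linarith
  set H := t m - t 1 with hH
  have hH0 : 0 ≤ H := by
    have := mono m 1 le_rfl (by omega) le_rfl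
    simpa [hH] using sub_nonneg.mpr this
  have icc_ioc : ∀ n : ℕ, Finset.Icc 1 n = Finset.Ioc 0 n := by
    intro n; ext x; simp; omega
  -- shift lemma: reindexing sums
  have shift : ∀ a : ℕ, a ≤ m →
      (∑ r ∈ Finset.Icc 1 (m - a), t (r + a)) = ∑ j ∈ Finset.Ioc a m, t j := by
    intro a ha
    rw [show Finset.Ioc a m = Finset.Icc (1 + a) (m - a + a) by
      ext x; simp [Finset.mem_Ioc, Finset.mem_Icc]; omega]
    rw [← Finset.map_add_right_Icc 1 (m - a) a, Finset.sum_map]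
    rfl
  have key1 : (∑ r ∈ Finset.Icc 1 (m - p), (t (r + p) - t r))
      = (∑ j ∈ Finset.Ioc p m, t j) - ∑ j ∈ Finset.Ioc 0 (m - p), t j := by
    rw [Finset.sum_sub_distrib, shift p hpm, icc_ioc]
  have key2 : (∑ r ∈ Finset.Icc 1 p, (t (r + (m - p)) - t r))
      = (∑ j ∈ Finset.Ioc (m - p) m, t j) - ∑ j ∈ Finset.Ioc 0 p, t j := by
    rw [Finset.sum_sub_distrib, icc_ioc]
    congr 1
    have := shift (m - p) (by omega)
    rw [show m - (m - p) = p by omega] at this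
    exact this
  have split1 : (∑ j ∈ Finset.Ioc 0 p, t j) + (∑ j ∈ Finset.Ioc p m, t j)
      = ∑ j ∈ Finset.Ioc 0 m, t j :=
    Finset.sum_Ioc_consecutive _ (by omega) hpm
  have split2 : (∑ j ∈ Finset.Ioc 0 (m - p), t j) + (∑ j ∈ Finset.Ioc (m - p) m, t j)
      = ∑ j ∈ Finset.Ioc 0 m, t j :=
    Finset.sum_Ioc_consecutive _ (by omega) (by omega)
  -- so the two telescoped sums are equal
  have eqsum : (∑ r ∈ Finset.Icc 1 (m - p), (t (r + p) - t r))
      = (∑ r ∈ Finset.Icc 1 p, (t (r + (m - p)) - t r)) := by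
    rw [key1, key2]; linarith
  -- each gap is in [0, H]
  have gap : ∀ i j, 1 ≤ i → i ≤ j → j ≤ m → t j - t i ≤ H ∧ 0 ≤ t j - t i := by
    intro i j h1 h2 h3
    have h4 := mono j i h1 h2 h3
    have h5 := mono m j (by omega) h3 le_rfl
    have h6 := mono i 1 le_rfl h1 (by omega)
    constructor <;> [simp only [hH]; skip] <;> linarith
  have sum2bound : (∑ r ∈ Finset.Icc 1 p, (t (r + (m - p)) - t r)) ≤ p * H := by
    calc (∑ r ∈ Finset.Icc 1 p, (t (r + (m - p)) - t r))
        ≤ ∑ r ∈ Finset.Icc 1 p, H := by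
          apply Finset.sum_le_sum
          intro r hr
          simp only [Finset.mem_Icc] at hr
          exact (gap r (r + (m - p)) hr.1 (by omega) (by omega)).1
      _ = p * H := by
          rw [Finset.sum_const, Nat.card_Icc]
          simp [nsmul_eq_mul]
  -- bound each squared term by H * gap
  have sq1 : (∑ r ∈ Finset.Icc 1 (m - p), (t (r + p) - t r) ^ 2)
      ≤ H * ∑ r ∈ Finset.Icc 1 (m - p), (t (r + p) - t r) := by
    rw [Finset.mul_sum]
    apply Finset.sum_le_sum
    intro r hr
    simp only [Finset.mem_Icc] at hr
    obtain ⟨hle, hnn⟩ := gap r (r + p) hr.1 (by omega) (by omega)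
    nlinarith
  have sq2 : (∑ r ∈ Finset.Icc 1 p, (t (r + (m - p)) - t r) ^ 2)
      ≤ H * ∑ r ∈ Finset.Icc 1 p, (t (r + (m - p)) - t r) := by
    rw [Finset.mul_sum]
    apply Finset.sum_le_sum
    intro r hr
    simp only [Finset.mem_Icc] at hr
    obtain ⟨hle, hnn⟩ := gap r (r + (m - p)) hr.1 (by omega) (by omega)
    nlinarith
  have final : H * (∑ r ∈ Finset.Icc 1 p, (t (r + (m - p)) - t r)) ≤ H * (p * H) :=
    mul_le_mul_of_nonneg_left sum2bound hH0
  calc (∑ r ∈ Finset.Icc 1 (m - p), (t (r + p) - t r) ^ 2)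
      + (∑ r ∈ Finset.Icc 1 p, (t (r + (m - p)) - t r) ^ 2)
      ≤ H * (∑ r ∈ Finset.Icc 1 (m - p), (t (r + p) - t r))
        + H * (∑ r ∈ Finset.Icc 1 p, (t (r + (m - p)) - t r)) := by linarith
    _ = 2 * (H * (∑ r ∈ Finset.Icc 1 p, (t (r + (m - p)) - t r))) := by
        rw [eqsum]; ring
    _ ≤ 2 * (H * (p * H)) := by linarith
    _ = 2 * p * H ^ 2 := by ring
end

section
/- Let m ≥ 2 be an integer and let t_1 ≤ t_2 ≤ ⋯ ≤ t_m be real numbers. Then Σ_{1≤r<s≤m} (t_s − t_r)² ≤ ⌊m²/4⌋ · (t_m − t_1)². (For m = 2k the constant is k², for m = 2k+1 it is k(k+1).) -/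
open Finset

lemma icc_to_range' (m : ℕ) (f : ℕ → ℝ) :
    ∑ j ∈ Icc 1 m, f j = ∑ j ∈ range m, f (j + 1) := by
  induction m with
  | zero => simp
  | succ n ih =>
    rw [Finset.sum_Icc_succ_top (by omega), ih, Finset.sum_range_succ]

lemma natsum' (m : ℕ) : ∑ j ∈ range m, (2 * (j + 1) - (m + 1)) = m ^ 2 / 4 := by
  induction m using Nat.twoStepInduction with
  | zero => simp
  | one => simp
  | more n ih _ =>
    rw [Finset.sum_range_succ']
    have h1 : ∀ j, 2 * (j + 1 + 1) - (n + 2 + 1) = 2 * (j + 1) - (n + 1) := by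
      intro j; omega
    simp only [h1]
    rw [Finset.sum_range_succ, ih]
    have e1 : (n + 2) ^ 2 = n ^ 2 + 4 * n + 4 := by ring
    omega

lemma csum' (m : ℕ) : ∑ j ∈ Icc 1 m, (2 * (j : ℝ) - m - 1) = 0 := by
  induction m with
  | zero => simp
  | succ n ihn =>
    rw [Finset.sum_Icc_succ_top (by omega)]
    have e : ∀ j ∈ Icc 1 n, 2 * (j : ℝ) - (↑(n + 1)) - 1 = (2 * (j : ℝ) - n - 1) + (-1) := by
      intro j _; push_cast; ring
    rw [Finset.sum_congr rfl e, Finset.sum_add_distrib, ihn, Finset.sum_const, Nat.card_Icc]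
    push_cast
    simp only [nsmul_eq_mul]
    ring

/-- Auxiliary inequality from the proofs of Theorems 1, 6, 8: for monotone
`t 1 ≤ ⋯ ≤ t m`, `Σ_{1≤r<s≤m} (t s - t r)² ≤ ⌊m²/4⌋ (t m - t 1)²`. -/
theorem stmt_2 (m : ℕ) (hm : 2 ≤ m) (t : ℕ → ℝ)
    (ht : ∀ j, 1 ≤ j → j < m → t j ≤ t (j + 1)) :
    (∑ r ∈ Finset.Icc 1 m, ∑ s ∈ Finset.Icc 1 m,
        if r < s then (t s - t r) ^ 2 else 0)
    ≤ ((m ^ 2 / 4 : ℕ) : ℝ) * (t m - t 1) ^ 2 := by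
  have mono : ∀ a b, 1 ≤ a → a ≤ b → b ≤ m → t a ≤ t b := by
    intro a b ha hab hbm
    induction b with
    | zero => omega
    | succ n ihn =>
      rcases Nat.lt_or_ge a (n + 1) with h | h
      · have h1 : t a ≤ t n := ihn (by omega) (by omega)
        have h2 : t n ≤ t (n + 1) := ht n (by omega) (by omega)
        linarith
      · have : a = n + 1 := by omega
        rw [this]
  set H : ℝ := t m - t 1 with hHdef
  have hH : 0 ≤ H := by
    have := mono 1 m le_rfl (by omega) le_rfl
    simp only [hHdef]; linarith
  -- pointwise bound by (t s - t r) * H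
  have step2 : (∑ r ∈ Icc 1 m, ∑ s ∈ Icc 1 m,
        if r < s then (t s - t r) ^ 2 else 0)
      ≤ ∑ r ∈ Icc 1 m, ∑ s ∈ Icc 1 m, if r < s then (t s - t r) * H else 0 := by
    apply Finset.sum_le_sum
    intro r hr
    apply Finset.sum_le_sum
    intro s hs
    simp only [Finset.mem_Icc] at hr hs
    by_cases hrs : r < s
    · simp only [if_pos hrs]
      have h1 : t r ≤ t s := mono r s (by omega) (by omega) (by omega)
      have h2 : t 1 ≤ t r := mono 1 r le_rfl (by omega) (by omega)
      have h3 : t s ≤ t m := mono s m (by omega) (by omega) le_rfl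
      have h4 : t s - t r ≤ H := by simp only [hHdef]; linarith
      nlinarith
    · simp [hrs]
  -- factor out H
  have factor : (∑ r ∈ Icc 1 m, ∑ s ∈ Icc 1 m, if r < s then (t s - t r) * H else 0)
      = (∑ r ∈ Icc 1 m, ∑ s ∈ Icc 1 m, if r < s then t s - t r else 0) * H := by
    rw [Finset.sum_mul]
    refine Finset.sum_congr rfl fun r _ => ?_
    rw [Finset.sum_mul]
    refine Finset.sum_congr rfl fun s _ => ?_
    split <;> simp
  -- the linear double sum equals a single weighted sum
  have split1 : (∑ r ∈ Icc 1 m, ∑ s ∈ Icc 1 m, if r < s then t s - t r else 0)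
      = (∑ j ∈ Icc 1 m, ((j : ℝ) - 1) * t j) - ∑ j ∈ Icc 1 m, ((m : ℝ) - j) * t j := by
    have e1 : ∀ r s : ℕ, (if r < s then t s - t r else 0)
        = (if r < s then t s else 0) - (if r < s then t r else 0) := by
      intro r s; split <;> simp
    simp only [e1, Finset.sum_sub_distrib]
    congr 1
    · rw [Finset.sum_comm]
      refine Finset.sum_congr rfl fun s hs => ?_
      simp only [Finset.mem_Icc] at hs
      have hfil : (Icc 1 m).filter (· < s) = Icc 1 (s - 1) := by
        ext r; simp only [Finset.mem_filter, Finset.mem_Icc]; omega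
      rw [← Finset.sum_filter, hfil, Finset.sum_const, Nat.card_Icc, nsmul_eq_mul]
      have e2 : ((s - 1 + 1 - 1 : ℕ) : ℝ) = (s : ℝ) - 1 := by
        have e3 : s - 1 + 1 - 1 = s - 1 := by omega
        rw [e3, Nat.cast_sub (by omega)]; simp
      rw [e2]
    · refine Finset.sum_congr rfl fun r hr => ?_
      simp only [Finset.mem_Icc] at hr
      have hfil : (Icc 1 m).filter (r < ·) = Icc (r + 1) m := by
        ext s; simp only [Finset.mem_filter, Finset.mem_Icc]; omega
      rw [← Finset.sum_filter, hfil, Finset.sum_const, Nat.card_Icc, nsmul_eq_mul]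
      have e2 : ((m + 1 - (r + 1) : ℕ) : ℝ) = (m : ℝ) - r := by
        have e3 : m + 1 - (r + 1) = m - r := by omega
        rw [e3, Nat.cast_sub (by omega)]
      rw [e2]
  have combine : (∑ j ∈ Icc 1 m, ((j : ℝ) - 1) * t j) - ∑ j ∈ Icc 1 m, ((m : ℝ) - j) * t j
      = ∑ j ∈ Icc 1 m, (2 * (j : ℝ) - m - 1) * t j := by
    rw [← Finset.sum_sub_distrib]
    refine Finset.sum_congr rfl fun j _ => ?_
    ring
  have shift : ∑ j ∈ Icc 1 m, (2 * (j : ℝ) - m - 1) * t j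
      = ∑ j ∈ Icc 1 m, (2 * (j : ℝ) - m - 1) * (t j - t 1) := by
    have : ∀ j ∈ Icc 1 m, (2 * (j : ℝ) - m - 1) * (t j - t 1)
        = (2 * (j : ℝ) - m - 1) * t j - (2 * (j : ℝ) - m - 1) * t 1 := by
      intro j _; ring
    rw [Finset.sum_congr rfl this, Finset.sum_sub_distrib, ← Finset.sum_mul, csum']
    ring
  have bound : ∑ j ∈ Icc 1 m, (2 * (j : ℝ) - m - 1) * (t j - t 1)
      ≤ ∑ j ∈ Icc 1 m, ((2 * j - (m + 1) : ℕ) : ℝ) * H := by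
    apply Finset.sum_le_sum
    intro j hj
    simp only [Finset.mem_Icc] at hj
    have hj1 : t 1 ≤ t j := mono 1 j le_rfl (by omega) (by omega)
    have hjm : t j ≤ t m := mono j m (by omega) (by omega) le_rfl
    have hHj : t j - t 1 ≤ H := by simp only [hHdef]; linarith
    by_cases h : 2 * j ≤ m + 1
    · have e : (2 * j - (m + 1) : ℕ) = 0 := by omega
      rw [e]
      have hc : 2 * (j : ℝ) - m - 1 ≤ 0 := by
        have : (2 * j : ℝ) ≤ (m : ℝ) + 1 := by exact_mod_cast h
        linarith
      simp only [Nat.cast_zero, zero_mul]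
      nlinarith
    · have e : ((2 * j - (m + 1) : ℕ) : ℝ) = 2 * (j : ℝ) - m - 1 := by
        rw [Nat.cast_sub (by omega)]; push_cast; ring
      rw [e]
      have hc : 0 ≤ 2 * (j : ℝ) - m - 1 := by
        have : (m : ℝ) + 1 ≤ (2 * j : ℝ) := by exact_mod_cast (by omega : m + 1 ≤ 2 * j)
        linarith
      nlinarith
  have final : ∑ j ∈ Icc 1 m, ((2 * j - (m + 1) : ℕ) : ℝ) * H
      = ((m ^ 2 / 4 : ℕ) : ℝ) * H := by
    rw [← Finset.sum_mul]
    congr 1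
    rw [icc_to_range' m (fun j => ((2 * j - (m + 1) : ℕ) : ℝ))]
    rw [← Nat.cast_sum]
    exact_mod_cast congrArg (Nat.cast (R := ℝ)) (natsum' m)
  have key : (∑ r ∈ Icc 1 m, ∑ s ∈ Icc 1 m, if r < s then t s - t r else 0)
      ≤ ((m ^ 2 / 4 : ℕ) : ℝ) * H := by
    rw [split1, combine, shift]
    calc _ ≤ _ := bound
      _ = _ := final
  calc (∑ r ∈ Finset.Icc 1 m, ∑ s ∈ Finset.Icc 1 m,
        if r < s then (t s - t r) ^ 2 else 0)
      ≤ ∑ r ∈ Icc 1 m, ∑ s ∈ Icc 1 m, if r < s then (t s - t r) * H else 0 := step2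
    _ = (∑ r ∈ Icc 1 m, ∑ s ∈ Icc 1 m, if r < s then t s - t r else 0) * H := factor
    _ ≤ (((m ^ 2 / 4 : ℕ) : ℝ) * H) * H := mul_le_mul_of_nonneg_right key hH
    _ = ((m ^ 2 / 4 : ℕ) : ℝ) * (t m - t 1) ^ 2 := by rw [hHdef]; ring
end

section
/- Let A be a real m × n matrix and b ∈ ℝ^m. A vector a* ∈ ℝⁿ minimizes the function a ↦ ‖b − A a‖₁ over ℝⁿ if and only if there exists v ∈ ℝ^m with ‖v‖_∞ ≤ 1, Aᵀ v = 0, and v_i = sign((b − A a*)_i) for every index i such that (b − A a*)_i ≠ 0. -/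
open Matrix

lemma sign_mul_self' (x : ℝ) : Real.sign x * x = |x| := by
  rcases lt_trichotomy x 0 with h|h|h
  · rw [Real.sign_of_neg h, abs_of_neg h]; ring
  · simp [h]
  · rw [Real.sign_of_pos h, abs_of_pos h]; ring

lemma abs_sign_le_one' (x : ℝ) : |Real.sign x| ≤ 1 := by
  rcases lt_trichotomy x 0 with h|h|h
  · simp [Real.sign_of_neg h]
  · simp [h]
  · simp [Real.sign_of_pos h]

/-- Theorem 3 of the paper (Watson's characterization of optimal solutions of
ℓ¹-minimization problems): `a*` minimizes `a ↦ ‖b - A a‖₁` iff there is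
`v` with `‖v‖_∞ ≤ 1`, `Aᵀ v = 0`, and `v i = sign((b - A a*)_i)` whenever
`(b - A a*)_i ≠ 0`. -/
theorem stmt_4 (m n : ℕ) (A : Matrix (Fin m) (Fin n) ℝ) (b : Fin m → ℝ)
    (astar : Fin n → ℝ) :
    (∀ a : Fin n → ℝ,
        (∑ i, |b i - A.mulVec astar i|) ≤ ∑ i, |b i - A.mulVec a i|) ↔
    ∃ v : Fin m → ℝ, (∀ i, |v i| ≤ 1) ∧ A.transpose.mulVec v = 0 ∧
      ∀ i, b i - A.mulVec astar i ≠ 0 →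
        v i = Real.sign (b i - A.mulVec astar i) := by
  classical
  set r : Fin m → ℝ := fun i => b i - A.mulVec astar i with hr
  have hri : ∀ i, r i = b i - A.mulVec astar i := fun i => rfl
  constructor
  · intro hopt
    set S : Set (Fin m → ℝ) :=
      Set.pi Set.univ (fun i => if r i = 0 then Set.Icc (-1:ℝ) 1 else {Real.sign (r i)})
      with hS
    suffices h0 : (0 : Fin n → ℝ) ∈ Aᵀ.mulVecLin '' S by
      obtain ⟨v, hvS, hv0⟩ := h0
      refine ⟨v, ?_, hv0, ?_⟩
      · intro i
        have hm := hvS i (Set.mem_univ i)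
        by_cases h : r i = 0
        · simp only [hS, h, if_pos, Set.mem_Icc] at hm
          exact abs_le.mpr hm
        · simp only [hS, h, if_neg, Set.mem_singleton_iff] at hm
          rw [hm]; exact abs_sign_le_one' _
      · intro i hi
        have hm := hvS i (Set.mem_univ i)
        rw [← hri i] at hi
        simp only [hS, hi, if_neg, Set.mem_singleton_iff] at hm
        rw [← hri i]
        exact hm
    by_contra h0
    have hSconv : Convex ℝ S := convex_pi (fun i _ => by
      by_cases h : r i = 0
      · simp only [h, if_pos]; exact convex_Icc _ _
      · simp only [h, if_neg, ite_false]; exact convex_singleton _)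
    have hSk : IsCompact S := isCompact_univ_pi (fun i => by
      by_cases h : r i = 0
      · simp only [h, if_pos]; exact isCompact_Icc
      · simp only [h, if_neg, ite_false]; exact isCompact_singleton)
    have hKc : Convex ℝ (Aᵀ.mulVecLin '' S) := hSconv.linear_image _
    have hKk : IsCompact (Aᵀ.mulVecLin '' S) :=
      hSk.image (Aᵀ.mulVecLin.continuous_of_finiteDimensional)
    obtain ⟨f, u, hfu, hu0⟩ := geometric_hahn_banach_closed_point hKc hKk.isClosed h0
    have hu : u < 0 := by simpa using hu0
    set d : Fin n → ℝ := fun j => f (Pi.single j 1) with hd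
    have hf : ∀ x, f x = ∑ j, x j * d j := by
      intro x
      conv_lhs => rw [pi_eq_sum_univ x]
      rw [map_sum]
      refine Finset.sum_congr rfl fun j _ => ?_
      rw [_root_.map_smul, smul_eq_mul]
      have h1 : (fun k => if j = k then (1:ℝ) else 0) = Pi.single j 1 := by
        ext k; simp [Pi.single_apply, eq_comm]
      rw [h1]
    set w : Fin m → ℝ := A.mulVec d with hw
    have hsep : ∀ v ∈ S, ∑ i, v i * w i < u := by
      intro v hv
      have hlt := hfu _ (Set.mem_image_of_mem _ hv)
      rw [hf] at hlt
      have heq : ∑ j, (Aᵀ.mulVecLin v) j * d j = ∑ i, v i * w i := by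
        have hdp : (Aᵀ.mulVec v) ⬝ᵥ d = v ⬝ᵥ w := by
          rw [hw, Matrix.mulVec_transpose, Matrix.dotProduct_mulVec]
        simpa only [Matrix.mulVecLin_apply, dotProduct] using hdp
      rwa [heq] at hlt
    set vs : Fin m → ℝ := fun i => if r i = 0 then Real.sign (w i) else Real.sign (r i)
      with hvs
    have hvsS : vs ∈ S := by
      intro i _
      by_cases h : r i = 0
      · simp only [hS, hvs, h, if_pos, Set.mem_Icc]
        exact abs_le.mp (abs_sign_le_one' _)
      · simp only [hS, hvs, h, if_neg, ite_false, Set.mem_singleton_iff]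
    obtain ⟨t, ht0, ht⟩ : ∃ t : ℝ, 0 < t ∧ ∀ i, r i ≠ 0 → t * |w i| ≤ |r i| := by
      set s := Finset.univ.filter (fun i => r i ≠ 0) with hsdef
      by_cases hne : s.Nonempty
      · set T := s.inf' hne (fun i => |r i| / (|w i| + 1)) with hT
        have hT0 : 0 < T := by
          rw [hT, Finset.lt_inf'_iff]
          intro i hi
          have hri0 : r i ≠ 0 := (Finset.mem_filter.mp hi).2
          exact div_pos (abs_pos.mpr hri0) (by positivity)
        refine ⟨T, hT0, fun i hi => ?_⟩
        have hmem : i ∈ s := Finset.mem_filter.mpr ⟨Finset.mem_univ i, hi⟩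
        have hle := Finset.inf'_le (fun i => |r i| / (|w i| + 1)) hmem
        have hpos : (0:ℝ) < |w i| + 1 := by positivity
        have h1 : T * (|w i| + 1) ≤ |r i| := (le_div_iff₀ hpos).mp hle
        nlinarith [abs_nonneg (w i)]
      · refine ⟨1, one_pos, fun i hi => ?_⟩
        exact absurd ⟨i, Finset.mem_filter.mpr ⟨Finset.mem_univ i, hi⟩⟩ hne
    have hkey : (0:ℝ) ≤ ∑ i, vs i * w i := by
      have h1 := hopt (astar - t • d)
      have h2 : ∀ i, b i - A.mulVec (astar - t • d) i = r i + t * w i := by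
        intro i
        rw [hri i, hw]
        simp only [Matrix.mulVec_sub, Matrix.mulVec_smul, Pi.sub_apply, Pi.smul_apply,
          smul_eq_mul]
        ring
      have h3 : ∀ i, |r i + t * w i| = |r i| + t * (vs i * w i) := by
        intro i
        by_cases h : r i = 0
        · simp only [h, zero_add, abs_zero, hvs, if_pos]
          rw [abs_mul, abs_of_pos ht0, sign_mul_self']
        · have htw := ht i h
          rcases lt_or_gt_of_ne h with hneg|hpos
          · have hle0 : r i + t * w i ≤ 0 := by
              have h4 : t * w i ≤ t * |w i| :=
                mul_le_mul_of_nonneg_left (le_abs_self _) ht0.le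
              have h5 : |r i| = -(r i) := abs_of_neg hneg
              linarith
            rw [abs_of_nonpos hle0, abs_of_neg hneg]
            simp only [hvs, h, ite_false, Real.sign_of_neg hneg]
            ring
          · have hge0 : 0 ≤ r i + t * w i := by
              have h4 : -(t * w i) ≤ t * |w i| := by
                rw [← mul_neg]
                exact mul_le_mul_of_nonneg_left (neg_le_abs _) ht0.le
              have h5 : |r i| = r i := abs_of_pos hpos
              linarith
            rw [abs_of_nonneg hge0, abs_of_pos hpos]
            simp only [hvs, h, ite_false, Real.sign_of_pos hpos]
            ring
      have h4 : (∑ i, |b i - A.mulVec (astar - t • d) i|)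
          = (∑ i, |r i|) + t * ∑ i, vs i * w i := by
        calc (∑ i, |b i - A.mulVec (astar - t • d) i|)
            = ∑ i, (|r i| + t * (vs i * w i)) := by
              refine Finset.sum_congr rfl fun i _ => ?_
              rw [h2 i, h3 i]
          _ = (∑ i, |r i|) + t * ∑ i, vs i * w i := by
              rw [Finset.sum_add_distrib, Finset.mul_sum]
      have h5 : (∑ i, |b i - A.mulVec astar i|) = ∑ i, |r i| := rfl
      rw [h4, h5] at h1
      by_contra hX
      push_neg at hX
      nlinarith [mul_pos ht0 (neg_pos.mpr hX)]
    linarith [hsep vs hvsS]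
  · rintro ⟨v, hv1, hv2, hv3⟩ a
    have hz : ∀ c : Fin n → ℝ, ∑ i, v i * (A.mulVec c) i = 0 := by
      intro c
      have hdp : (Aᵀ.mulVec v) ⬝ᵥ c = v ⬝ᵥ (A.mulVec c) := by
        rw [Matrix.mulVec_transpose, Matrix.dotProduct_mulVec]
      rw [hv2] at hdp
      simpa [dotProduct] using hdp.symm
    have hsplit : ∀ c : Fin n → ℝ,
        ∑ i, v i * (b i - A.mulVec c i) = ∑ i, v i * b i := by
      intro c
      simp_rw [mul_sub]
      rw [Finset.sum_sub_distrib, hz c, sub_zero]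
    have hva : ∑ i, v i * (b i - A.mulVec a i) ≤ ∑ i, |b i - A.mulVec a i| := by
      refine Finset.sum_le_sum fun i _ => ?_
      calc v i * (b i - A.mulVec a i) ≤ |v i * (b i - A.mulVec a i)| := le_abs_self _
        _ = |v i| * |b i - A.mulVec a i| := abs_mul _ _
        _ ≤ 1 * |b i - A.mulVec a i| :=
            mul_le_mul_of_nonneg_right (hv1 i) (abs_nonneg _)
        _ = |b i - A.mulVec a i| := one_mul _
    have heq : ∑ i, v i * (b i - A.mulVec astar i) = ∑ i, |b i - A.mulVec astar i| := by
      refine Finset.sum_congr rfl fun i _ => ?_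
      by_cases h : b i - A.mulVec astar i = 0
      · simp [h]
      · rw [hv3 i h, sign_mul_self']
    calc (∑ i, |b i - A.mulVec astar i|)
        = ∑ i, v i * (b i - A.mulVec astar i) := heq.symm
      _ = ∑ i, v i * b i := hsplit astar
      _ = ∑ i, v i * (b i - A.mulVec a i) := (hsplit a).symm
      _ ≤ ∑ i, |b i - A.mulVec a i| := hva
end

section
/- Let m ≥ 2 and p ≥ m be integers, let t : ℤ → ℝ be strictly increasing, and let i ∈ ℤ. Define the Greville abscissae θ_j = (1/m) Σ_{r=1}^{m} t_{j+1−r} and θ̄_i^{(2)} = (1/(m²(m−1))) Σ_{i+1−m ≤ r < s ≤ i} (t_r − t_s)². Set a*(−p) = −θ̄_i^{(2)} / ((θ_{i+p} − θ_{i−p})(θ_i − θ_{i−p})), a*(0) = 1 + θ̄_i^{(2)} / ((θ_{i+p} − θ_i)(θ_i − θ_{i−p})), a*(p) = −θ̄_i^{(2)} / ((θ_{i+p} − θ_{i−p})(θ_{i+p} − θ_i)). Then |a*(−p)| + |a*(0)| + |a*(p)| ≤ (m+1)/(m−1). Equivalently, θ̄_i^{(2)} ≤ (1/(m−1)) (θ_i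 − θ_{i−p})(θ_{i+p} − θ_i). -/
private lemma reindex_sum (m : ℕ) (t : ℤ → ℝ) (j : ℤ) :
    ∑ r ∈ Finset.Icc 1 m, t (j + 1 - r) = ∑ k ∈ Finset.Icc (j + 1 - m) j, t k := by
  refine Finset.sum_nbij' (fun r => j + 1 - (r : ℤ)) (fun k => (j + 1 - k).toNat) ?_ ?_ ?_ ?_ ?_
  · intro a ha; simp only [Finset.mem_Icc] at *; omega
  · intro a ha; simp only [Finset.mem_Icc] at *; omega
  · intro a ha; simp only [Finset.mem_Icc] at *; omega
  · intro a ha; simp only [Finset.mem_Icc] at *; omega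
  · intro a ha; rfl

private lemma pair_sum (I : Finset ℤ) (f : ℤ → ℝ) :
    ∑ r ∈ I, ∑ s ∈ I, (if r < s then (f r - f s)^2 else 0)
      = I.card * (∑ r ∈ I, (f r)^2) - (∑ r ∈ I, f r)^2 := by
  have h1 : ∑ r ∈ I, ∑ s ∈ I, (f r - f s)^2
      = 2 * I.card * (∑ r ∈ I, (f r)^2) - 2 * (∑ r ∈ I, f r)^2 := by
    simp only [sub_sq]
    simp only [Finset.sum_add_distrib, Finset.sum_sub_distrib, Finset.sum_const,
      ← Finset.sum_mul, ← Finset.mul_sum, nsmul_eq_mul]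
    ring
  have h2 : ∀ r s : ℤ, (f r - f s)^2
      = (if r < s then (f r - f s)^2 else 0) + (if s < r then (f r - f s)^2 else 0) := by
    intro r s
    rcases lt_trichotomy r s with h | h | h
    · simp [h, asymm h]
    · simp [h]
    · simp [h, asymm h]
  have h3 : ∑ r ∈ I, ∑ s ∈ I, (if s < r then (f r - f s)^2 else 0)
      = ∑ r ∈ I, ∑ s ∈ I, (if r < s then (f r - f s)^2 else 0) := by
    rw [Finset.sum_comm]
    congr 1; ext r; congr 1; ext s
    rcases eq_or_ne r s with h | h
    · simp [h]
    · congr 1; ring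
  have h4 : ∑ r ∈ I, ∑ s ∈ I, (f r - f s)^2
      = 2 * ∑ r ∈ I, ∑ s ∈ I, (if r < s then (f r - f s)^2 else 0) := by
    calc ∑ r ∈ I, ∑ s ∈ I, (f r - f s)^2
        = ∑ r ∈ I, ∑ s ∈ I, ((if r < s then (f r - f s)^2 else 0)
            + (if s < r then (f r - f s)^2 else 0)) := by simp_rw [← h2]
      _ = _ := by simp only [Finset.sum_add_distrib, h3]; ring
  linarith [h4, h1]

set_option maxHeartbeats 1000000 in
/-- Theorem 4 of the paper (analytic content): for `m ≥ 2`, `p ≥ m` and a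
strictly increasing knot sequence `t : ℤ → ℝ`, the coefficients of the
discrete quasi-interpolant `Q_p*` satisfy
`|a*(-p)| + |a*(0)| + |a*(p)| ≤ (m+1)/(m-1)`. -/
theorem stmt_5 (m p : ℕ) (hm : 2 ≤ m) (hp : m ≤ p)
    (t : ℤ → ℝ) (ht : StrictMono t) (i : ℤ)
    (θ : ℤ → ℝ)
    (hθ : ∀ j : ℤ, θ j = (1 / (m : ℝ)) * ∑ r ∈ Finset.Icc 1 m, t (j + 1 - r))
    (θbar2 : ℝ)
    (hθbar2 : θbar2 = (1 / ((m : ℝ) ^ 2 * ((m : ℝ) - 1))) *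
      ∑ r ∈ Finset.Icc (i + 1 - m) i, ∑ s ∈ Finset.Icc (i + 1 - m) i,
        if r < s then (t r - t s) ^ 2 else 0)
    (am a0 ap : ℝ)
    (ham : am = -θbar2 / ((θ (i + p) - θ (i - p)) * (θ i - θ (i - p))))
    (ha0 : a0 = 1 + θbar2 / ((θ (i + p) - θ i) * (θ i - θ (i - p))))
    (hap : ap = -θbar2 / ((θ (i + p) - θ (i - p)) * (θ (i + p) - θ i))) :
    |am| + |a0| + |ap| ≤ ((m : ℝ) + 1) / ((m : ℝ) - 1) := by
  have hm0 : (0:ℝ) < m := by positivity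
  have hm1 : (0:ℝ) < (m:ℝ) - 1 := by
    have : (2:ℝ) ≤ m := by exact_mod_cast hm
    linarith
  set I := Finset.Icc (i + 1 - m) i with hI
  have hcard : (I.card : ℝ) = m := by
    rw [hI, Int.card_Icc]; norm_cast; omega
  set S := ∑ r ∈ I, t r with hS
  set S2 := ∑ r ∈ I, (t r)^2 with hS2
  -- θ i in terms of S
  have hθi : θ i = S / m := by
    rw [hθ i, reindex_sum]; field_simp [hS, hI]; rfl
  -- θbar2 in terms of S, S2
  have hbar : θbar2 = (m * S2 - S^2) / (m^2 * ((m:ℝ) - 1)) := by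
    rw [hθbar2, pair_sum, hcard]
    field_simp; rfl
  -- θbar2 ≥ 0
  have hbar_nonneg : 0 ≤ θbar2 := by
    rw [hθbar2]
    apply mul_nonneg
    · positivity
    · apply Finset.sum_nonneg; intro r _; apply Finset.sum_nonneg; intro s _
      split <;> positivity
  -- strict monotonicity of θ
  have hθmono : ∀ j k : ℤ, j < k → θ j < θ k := by
    intro j k hjk
    rw [hθ j, hθ k]
    have : ∑ r ∈ Finset.Icc 1 m, t (j + 1 - r) < ∑ r ∈ Finset.Icc 1 m, t (k + 1 - r) := by
      apply Finset.sum_lt_sum_of_nonempty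
      · exact Finset.nonempty_Icc.2 (by omega)
      · intro r _; exact ht (by omega)
    have hpos : (0:ℝ) < 1 / m := by positivity
    exact (mul_lt_mul_iff_right₀ hpos).2 this
  have hpm : 0 < p := lt_of_lt_of_le (by omega) hp
  have hA : 0 < θ i - θ (i - p) := by
    have := hθmono (i - p) i (by omega); linarith
  have hB : 0 < θ (i + p) - θ i := by
    have := hθmono i (i + p) (by omega); linarith
  set A := θ i - θ (i - p) with hAdef
  set B := θ (i + p) - θ i with hBdef
  -- bounds: θ (i-p) ≤ t r ≤ θ (i+p) for r ∈ I
  have hlow : ∀ r ∈ I, θ (i - p) ≤ t r := by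
    intro r hr
    simp only [hI, Finset.mem_Icc] at hr
    rw [hθ (i - p)]
    have hb : ∀ q ∈ Finset.Icc 1 m, t (i - p + 1 - q) ≤ t r := by
      intro q hq
      simp only [Finset.mem_Icc] at hq
      exact ht.monotone (by omega)
    calc (1 / (m:ℝ)) * ∑ q ∈ Finset.Icc 1 m, t (i - p + 1 - q)
        ≤ (1 / (m:ℝ)) * ∑ q ∈ Finset.Icc 1 m, t r := by
          apply mul_le_mul_of_nonneg_left _ (by positivity)
          exact Finset.sum_le_sum hb
      _ = t r := by
          rw [Finset.sum_const]
          rw [Nat.card_Icc]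
          simp only [nsmul_eq_mul]
          have hmm : ((m + 1 - 1 : ℕ) : ℝ) = m := by norm_cast
          rw [hmm]; field_simp
  have hhigh : ∀ r ∈ I, t r ≤ θ (i + p) := by
    intro r hr
    simp only [hI, Finset.mem_Icc] at hr
    rw [hθ (i + p)]
    have hb : ∀ q ∈ Finset.Icc 1 m, t r ≤ t (i + p + 1 - q) := by
      intro q hq
      simp only [Finset.mem_Icc] at hq
      exact ht.monotone (by omega)
    calc t r = (1 / (m:ℝ)) * ∑ q ∈ Finset.Icc 1 m, t r := by
          rw [Finset.sum_const, Nat.card_Icc]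
          simp only [nsmul_eq_mul]
          have hmm : ((m + 1 - 1 : ℕ) : ℝ) = m := by norm_cast
          rw [hmm]; field_simp
      _ ≤ _ := by
          apply mul_le_mul_of_nonneg_left _ (by positivity)
          exact Finset.sum_le_sum hb
  -- Bhatia–Davis style bound: m*S2 - S^2 ≤ m^2 * A * B
  have hBD : m * S2 - S^2 ≤ (m:ℝ)^2 * (A * B) := by
    have hsum : 0 ≤ ∑ r ∈ I, (θ (i + p) - t r) * (t r - θ (i - p)) := by
      apply Finset.sum_nonneg
      intro r hr
      exact mul_nonneg (by linarith [hhigh r hr]) (by linarith [hlow r hr])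
    have hexp : ∑ r ∈ I, (θ (i + p) - t r) * (t r - θ (i - p))
        = (θ (i + p) + θ (i - p)) * S - S2 - m * (θ (i + p) * θ (i - p)) := by
      have : ∀ r : ℤ, (θ (i + p) - t r) * (t r - θ (i - p))
          = (θ (i + p) + θ (i - p)) * t r - (t r)^2 - θ (i + p) * θ (i - p) := by
        intro r; ring
      simp_rw [this]
      rw [Finset.sum_sub_distrib, Finset.sum_sub_distrib, ← Finset.mul_sum,
        Finset.sum_const, nsmul_eq_mul, hcard, ← hS, ← hS2]
    have h5 : (m:ℝ)^2*(A*B) = (S - m*θ (i-p))*(m*θ (i+p) - S) := by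
      rw [hAdef, hBdef, hθi]; field_simp
    have h6 : (m:ℝ)*S2 ≤ m*((θ (i+p) + θ (i-p))*S - m*(θ (i+p)*θ (i-p))) := by
      apply mul_le_mul_of_nonneg_left (by linarith) hm0.le
    rw [h5]
    nlinarith [h6]
  -- key inequality
  have hkey : θbar2 ≤ A * B / ((m:ℝ) - 1) := by
    rw [hbar]
    rw [div_le_div_iff₀ (by positivity) hm1]
    nlinarith [hBD]
  -- final computation
  have hABpos : 0 < A * B := mul_pos hA hB
  have hsumpos : 0 < A + B := by linarith
  have hipm : θ (i + p) - θ (i - p) = A + B := by rw [hAdef, hBdef]; ring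
  have ham' : |am| = θbar2 / ((A + B) * A) := by
    rw [ham, hipm]
    rw [abs_of_nonpos (by
      apply div_nonpos_of_nonpos_of_nonneg (by linarith) (by positivity))]
    field_simp
  have hap' : |ap| = θbar2 / ((A + B) * B) := by
    rw [hap, hipm]
    rw [abs_of_nonpos (by
      apply div_nonpos_of_nonpos_of_nonneg (by linarith) (by positivity))]
    field_simp
  have ha0' : |a0| = 1 + θbar2 / (B * A) := by
    rw [ha0, abs_of_nonneg]
    have : 0 ≤ θbar2 / (B * A) := by positivity
    linarith
  rw [ham', ha0', hap']
  have heq : θbar2 / ((A + B) * A) + (1 + θbar2 / (B * A)) + θbar2 / ((A + B) * B)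
      = 1 + 2 * θbar2 / (A * B) := by
    field_simp
    ring
  rw [heq]
  have h7' : θbar2 * ((m:ℝ) - 1) ≤ A * B := (le_div_iff₀ hm1).mp hkey
  have h7 : 2 * θbar2 / (A * B) ≤ 2 / ((m:ℝ) - 1) := by
    rw [div_le_div_iff₀ hABpos hm1]
    linarith [h7']
  have h8 : ((m:ℝ) + 1) / ((m:ℝ) - 1) = 1 + 2 / ((m:ℝ) - 1) := by
    field_simp
    ring
  rw [h8]
  linarith
end

section
/- Let m ≥ 2 be an integer and let t_1 ≤ t_2 ≤ ⋯ ≤ t_m be real numbers. Then Σ_{1≤r<s≤m} (t_r − t_s)² ≤ (Σ_{j=2}^{m} (t_j − t_1)) · (Σ_{j=1}^{m−1} (t_m − t_j)). -/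
/-- Key inequality from the proof of Theorem 4: for monotone `t 1 ≤ ⋯ ≤ t m`,
`Σ_{1≤r<s≤m}(t r - t s)² ≤ (Σ_{j=2}^m (t j - t 1)) (Σ_{j=1}^{m-1} (t m - t j))`. -/
theorem stmt_6 (m : ℕ) (hm : 2 ≤ m) (t : ℕ → ℝ)
    (ht : ∀ j, 1 ≤ j → j < m → t j ≤ t (j + 1)) :
    (∑ r ∈ Finset.Icc 1 m, ∑ s ∈ Finset.Icc 1 m,
        if r < s then (t r - t s) ^ 2 else 0)
    ≤ (∑ j ∈ Finset.Icc 2 m, (t j - t 1)) *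
      (∑ j ∈ Finset.Icc 1 (m - 1), (t m - t j)) := by
  have mono : ∀ i j, 1 ≤ i → i ≤ j → j ≤ m → t i ≤ t j := by
    intro i j h1 hij hjm
    induction j with
    | zero => omega
    | succ n ih =>
      rcases Nat.eq_or_lt_of_le hij with h | h
      · rw [h]
      · exact le_trans (ih (by omega) (by omega))
          (ht n (by omega) (by omega))
  calc (∑ r ∈ Finset.Icc 1 m, ∑ s ∈ Finset.Icc 1 m,
        if r < s then (t r - t s) ^ 2 else 0)
      = ∑ p ∈ (Finset.Icc 1 m ×ˢ Finset.Icc 1 m).filter (fun p => p.1 < p.2),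
          (t p.1 - t p.2) ^ 2 := by
        rw [Finset.sum_filter, Finset.sum_product]
    _ ≤ ∑ p ∈ (Finset.Icc 1 m ×ˢ Finset.Icc 1 m).filter (fun p => p.1 < p.2),
          (t p.2 - t 1) * (t m - t p.1) := by
        apply Finset.sum_le_sum
        intro p hp
        simp only [Finset.mem_filter, Finset.mem_product, Finset.mem_Icc] at hp
        obtain ⟨⟨⟨h1r, hrm⟩, ⟨h1s, hsm⟩⟩, hrs⟩ := hp
        have h1 : t 1 ≤ t p.1 := mono 1 p.1 le_rfl h1r hrm
        have h2 : t p.1 ≤ t p.2 := mono p.1 p.2 h1r (le_of_lt hrs) hsm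
        have h3 : t p.2 ≤ t m := mono p.2 m h1s hsm le_rfl
        nlinarith [sq_nonneg (t p.1 - t p.2)]
    _ ≤ ∑ p ∈ Finset.Icc 1 (m - 1) ×ˢ Finset.Icc 2 m,
          (t p.2 - t 1) * (t m - t p.1) := by
        apply Finset.sum_le_sum_of_subset_of_nonneg
        · intro p hp
          simp only [Finset.mem_filter, Finset.mem_product, Finset.mem_Icc] at hp ⊢
          omega
        · intro p hp _
          simp only [Finset.mem_product, Finset.mem_Icc] at hp
          have h1 : t 1 ≤ t p.2 := mono 1 p.2 le_rfl (by omega) hp.2.2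
          have h2 : t p.1 ≤ t m := mono p.1 m hp.1.1 (by omega) le_rfl
          nlinarith
    _ = (∑ j ∈ Finset.Icc 2 m, (t j - t 1)) *
        (∑ j ∈ Finset.Icc 1 (m - 1), (t m - t j)) := by
        rw [Finset.sum_product, Finset.sum_mul_sum, Finset.sum_comm]
end

section
/- Let m ≥ 2 and p ≥ m be integers, let t : ℤ → ℝ be strictly increasing, and let i ∈ ℤ. Define θ_j = (1/m) Σ_{r=1}^{m} t_{j+1−r}, θ_i^{(2)} = (2/(m(m−1))) Σ_{i+1−m ≤ r < s ≤ i} t_r t_s, and θ̄_i^{(2)} = θ_i² − θ_i^{(2)}. Assume the knot condition θ_{i−1} + θ_i ≤ θ_{i−p} + θ_{i+p} ≤ θ_i + θ_{i+1}. Let a* : {−p,…,p} → ℝ be given by a*(−p) = −θ̄_i^{(2)}/((θ_{i+p} − θ_{i−p})(θ_i − θ_{i−p})), a*(0) = 1 + θ̄_i^{(2)}/((θ_{i+p} − θ_i)(θ_i − θ_{i−p})), a*(p) = −θ̄_i^{(2)}/((θ_{i+p} − θ_{i−p})(θ_{i+p} − θ_i)), and a*(s) = 0 for s ∉ {−p,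 0, p}. Then for every a : {−p,…,p} → ℝ satisfying Σ_{s=−p}^{p} a(s) = 1, Σ_{s=−p}^{p} a(s) θ_{i+s} = θ_i, and Σ_{s=−p}^{p} a(s) θ_{i+s}² = θ_i^{(2)}, one has Σ_{s=−p}^{p} |a*(s)| ≤ Σ_{s=−p}^{p} |a(s)|. -/
set_option maxHeartbeats 1000000 in
/-- Theorem 5 of the paper: under the knot condition
`θ_{i-1} + θ_i ≤ θ_{i-p} + θ_{i+p} ≤ θ_i + θ_{i+1}`, the coefficient vector
`a*` of the discrete quasi-interpolant `Q_p*` is an optimal solution of the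
local ℓ¹-minimization problem with the Vandermonde constraints expressing
exactness on ℙ₂. -/
theorem stmt_7 (m p : ℕ) (hm : 2 ≤ m) (hp : m ≤ p)
    (t : ℤ → ℝ) (ht : StrictMono t) (i : ℤ)
    (θ : ℤ → ℝ)
    (hθ : ∀ j : ℤ, θ j = (1 / (m : ℝ)) * ∑ r ∈ Finset.Icc 1 m, t (j + 1 - r))
    (θ2 : ℝ)
    (hθ2 : θ2 = (2 / ((m : ℝ) * ((m : ℝ) - 1))) *
      ∑ r ∈ Finset.Icc (i + 1 - m) i, ∑ s ∈ Finset.Icc (i + 1 - m) i,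
        if r < s then t r * t s else 0)
    (θbar2 : ℝ) (hθbar2 : θbar2 = θ i ^ 2 - θ2)
    (hknot1 : θ (i - 1) + θ i ≤ θ (i - p) + θ (i + p))
    (hknot2 : θ (i - p) + θ (i + p) ≤ θ i + θ (i + 1))
    (astar : ℤ → ℝ)
    (h1 : astar (-p) = -θbar2 / ((θ (i + p) - θ (i - p)) * (θ i - θ (i - p))))
    (h2 : astar 0 = 1 + θbar2 / ((θ (i + p) - θ i) * (θ i - θ (i - p))))
    (h3 : astar p = -θbar2 / ((θ (i + p) - θ (i - p)) * (θ (i + p) - θ i)))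
    (h4 : ∀ s : ℤ, s ≠ -(p : ℤ) → s ≠ 0 → s ≠ (p : ℤ) → astar s = 0)
    (a : ℤ → ℝ)
    (hc0 : ∑ s ∈ Finset.Icc (-(p : ℤ)) p, a s = 1)
    (hc1 : ∑ s ∈ Finset.Icc (-(p : ℤ)) p, a s * θ (i + s) = θ i)
    (hc2 : ∑ s ∈ Finset.Icc (-(p : ℤ)) p, a s * θ (i + s) ^ 2 = θ2) :
    ∑ s ∈ Finset.Icc (-(p : ℤ)) p, |astar s| ≤
      ∑ s ∈ Finset.Icc (-(p : ℤ)) p, |a s| := by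
  have hmR : (2:ℝ) ≤ (m:ℝ) := by exact_mod_cast hm
  have hm0 : (0:ℝ) < (m:ℝ) := by linarith
  have hmne : (m:ℝ) ≠ 0 := ne_of_gt hm0
  have hm1ne : (m:ℝ) - 1 ≠ 0 := by intro h; linarith
  have hpZ : (2:ℤ) ≤ (p:ℤ) := by exact_mod_cast le_trans hm hp
  -- θ is strictly monotone
  have hmono : StrictMono θ := by
    intro j k hjk
    rw [hθ j, hθ k]
    have hpos : (0:ℝ) < 1 / (m:ℝ) := by positivity
    refine mul_lt_mul_of_pos_left ?_ hpos
    refine Finset.sum_lt_sum_of_nonempty (Finset.nonempty_Icc.2 (by omega)) ?_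
    intro r _
    exact ht (by omega)
  set u := θ (i - (p:ℤ)) with hu
  set v := θ (i + (p:ℤ)) with hv
  have hA : 0 < θ i - u := sub_pos.2 (hmono (by omega))
  have hB : 0 < v - θ i := sub_pos.2 (hmono (by omega))
  set A := θ i - u with hAdef
  set B := v - θ i with hBdef
  have hAne : A ≠ 0 := ne_of_gt hA
  have hBne : B ≠ 0 := ne_of_gt hB
  -- θbar2 ≥ 0
  set I : Finset ℤ := Finset.Icc (i + 1 - (m:ℤ)) i with hI
  have hS1 : θ i = (1/(m:ℝ)) * ∑ k ∈ I, t k := by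
    rw [hθ i]
    congr 1
    refine Finset.sum_nbij' (fun r : ℕ => i + 1 - (r:ℤ)) (fun k : ℤ => (i + 1 - k).toNat)
      ?_ ?_ ?_ ?_ ?_
    · intro r hr; simp only [Finset.mem_Icc, hI] at *; omega
    · intro k hk; simp only [Finset.mem_Icc, hI] at *; omega
    · intro r hr; simp only [Finset.mem_Icc] at hr; omega
    · intro k hk; simp only [Finset.mem_Icc, hI] at hk; omega
    · intro r _; rfl
  set S1 : ℝ := ∑ k ∈ I, t k with hS1def
  set Q : ℝ := ∑ k ∈ I, t k ^ 2 with hQdef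
  set S2 : ℝ := ∑ r ∈ I, ∑ s ∈ I, if r < s then t r * t s else 0 with hS2def
  have hsq : S1 ^ 2 = Q + 2 * S2 := by
    have e1 : S1 ^ 2 = ∑ r ∈ I, ∑ s ∈ I, t r * t s := by
      rw [sq, hS1def, Finset.sum_mul_sum]
    have e2 : ∀ r ∈ I, ∀ s ∈ I, t r * t s =
        (if r < s then t r * t s else 0) + (if s < r then t r * t s else 0)
          + (if r = s then t r * t s else 0) := by
      intro r _ s _
      rcases lt_trichotomy r s with h | h | h
      · simp [h, not_lt_of_gt h, ne_of_lt h]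
      · simp [h]
      · simp [h, not_lt_of_gt h, ne_of_gt h]
    have e3 : ∑ r ∈ I, ∑ s ∈ I, t r * t s = S2 + S2 + Q := by
      calc ∑ r ∈ I, ∑ s ∈ I, t r * t s
          = ∑ r ∈ I, ∑ s ∈ I, ((if r < s then t r * t s else 0)
            + (if s < r then t r * t s else 0) + (if r = s then t r * t s else 0)) :=
            Finset.sum_congr rfl fun r hr => Finset.sum_congr rfl fun s hs => e2 r hr s hs
        _ = S2 + S2 + Q := by
            simp only [Finset.sum_add_distrib]
            congr 1
            · congr 1
              rw [hS2def, Finset.sum_comm]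
              refine Finset.sum_congr rfl fun r _ => Finset.sum_congr rfl fun s _ => ?_
              by_cases h : s < r <;> simp [h, mul_comm]
            · rw [hQdef]
              refine Finset.sum_congr rfl fun r hr => ?_
              rw [Finset.sum_ite_eq I r (fun s => t r * t s), if_pos hr, sq]
    rw [e1, e3]; ring
  have hcard : ((I.card : ℕ) : ℝ) = (m : ℝ) := by
    rw [hI, Int.card_Icc]
    norm_cast
    omega
  have hCS : S1 ^ 2 ≤ (m:ℝ) * Q := by
    have h := sq_sum_le_card_mul_sum_sq (s := I) (f := t)
    rw [← hcard]
    exact_mod_cast h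
  have h2S2 : 2 * S2 = S1 ^ 2 - Q := by linarith [hsq]
  have hbar_eq : θbar2 = ((m:ℝ) * Q - S1 ^ 2) / ((m:ℝ)^2 * ((m:ℝ) - 1)) := by
    rw [hθbar2, hS1, hθ2]
    field_simp
    linear_combination (-(m:ℝ)) * h2S2
  have hbar_nonneg : 0 ≤ θbar2 := by
    rw [hbar_eq]
    exact div_nonneg (by linarith) (mul_nonneg (sq_nonneg _) (by linarith))
  -- value of the LHS
  have hmemsub : ({-(p:ℤ), 0, (p:ℤ)} : Finset ℤ) ⊆ Finset.Icc (-(p:ℤ)) p := by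
    intro s hs
    simp only [Finset.mem_insert, Finset.mem_singleton] at hs
    simp only [Finset.mem_Icc]
    rcases hs with h | h | h <;> omega
  have hzero : ∀ s ∈ Finset.Icc (-(p:ℤ)) p,
      s ∉ ({-(p:ℤ), 0, (p:ℤ)} : Finset ℤ) → |astar s| = 0 := by
    intro s _ hns
    simp only [Finset.mem_insert, Finset.mem_singleton] at hns
    push_neg at hns
    rw [h4 s hns.1 hns.2.1 hns.2.2, abs_zero]
  have hLHS : ∑ s ∈ Finset.Icc (-(p:ℤ)) p, |astar s|
      = |astar (-p)| + |astar 0| + |astar p| := by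
    rw [← Finset.sum_subset hmemsub hzero]
    rw [show ({-(p:ℤ), 0, (p:ℤ)} : Finset ℤ)
        = insert (-(p:ℤ)) (insert (0:ℤ) {(p:ℤ)}) from rfl]
    rw [Finset.sum_insert (by
        simp only [Finset.mem_insert, Finset.mem_singleton]; omega),
      Finset.sum_insert (by simp only [Finset.mem_singleton]; omega),
      Finset.sum_singleton, add_assoc]
  have hvu : v - u = A + B := by rw [hAdef, hBdef]; ring
  have hval1 : |astar (-p)| = θbar2 / ((A + B) * A) := by
    rw [h1, hvu]
    rw [abs_of_nonpos (by
      apply div_nonpos_of_nonpos_of_nonneg (by linarith) (by positivity))]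
    rw [neg_div]
    ring
  have hval2 : |astar 0| = 1 + θbar2 / (B * A) := by
    rw [h2]
    have hd : 0 ≤ θbar2 / (B * A) := div_nonneg hbar_nonneg (by positivity)
    rw [abs_of_nonneg (by linarith)]
  have hval3 : |astar p| = θbar2 / ((A + B) * B) := by
    rw [h3, hvu]
    rw [abs_of_nonpos (by
      apply div_nonpos_of_nonpos_of_nonneg (by linarith) (by positivity))]
    rw [neg_div]
    ring
  have hLHSval : ∑ s ∈ Finset.Icc (-(p:ℤ)) p, |astar s| = 1 + 2 * θbar2 / (A * B) := by
    rw [hLHS, hval1, hval2, hval3]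
    have hABne : A + B ≠ 0 := by positivity
    field_simp
    ring
  -- the dual quadratic
  set c : ℝ := 2 / (A * B) with hc
  have hc0' : 0 < c := by positivity
  have hcab : c * (A * B) = 2 := by rw [hc]; field_simp
  have hAB : -(A * B) = (θ i - u) * (θ i - v) := by rw [hAdef, hBdef]; ring
  have hq_bound : ∀ s ∈ Finset.Icc (-(p:ℤ)) p,
      |(-1 - c * ((θ (i + s) - u) * (θ (i + s) - v)))| ≤ 1 := by
    intro s hs
    simp only [Finset.mem_Icc] at hs
    set x := θ (i + s) with hx
    have hxu : u ≤ x := by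
      rcases eq_or_lt_of_le hs.1 with h | h
      · rw [hx, hu, ← h, show i + -(p:ℤ) = i - (p:ℤ) from by ring]
      · exact le_of_lt (hmono (by omega))
    have hxv : x ≤ v := by
      rcases eq_or_lt_of_le hs.2 with h | h
      · rw [hx, hv, h]
      · exact le_of_lt (hmono (by omega))
    have hlow : (x - u) * (x - v) ≤ 0 :=
      mul_nonpos_of_nonneg_of_nonpos (by linarith) (by linarith)
    have hup : 0 ≤ (x - θ i) * (x + θ i - u - v) := by
      rcases lt_trichotomy s 0 with h | h | h
      · have hx1 : x ≤ θ (i - 1) := by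
          rcases eq_or_lt_of_le (show s ≤ -1 by omega) with h' | h'
          · rw [hx, h', show i + (-1:ℤ) = i - 1 from by ring]
          · exact le_of_lt (hmono (by omega))
        have hxθ : x < θ i := hmono (by omega)
        have h9 : (0:ℝ) ≤ (θ i - x) * (u + v - x - θ i) :=
          mul_nonneg (by linarith) (by linarith [hknot1])
        have h10 : (x - θ i) * (x + θ i - u - v) = (θ i - x) * (u + v - x - θ i) := by
          ring
        rw [h10]; exact h9
      · rw [hx, h]; simp
      · have hx1 : θ (i + 1) ≤ x := by
          rcases eq_or_lt_of_le (show 1 ≤ s by omega) with h' | h'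
          · rw [hx, ← h']
          · exact le_of_lt (hmono (by omega))
        have hxθ : θ i < x := hmono (by omega)
        apply mul_nonneg (by linarith)
        linarith [hknot2]
    have hge : -(A * B) ≤ (x - u) * (x - v) := by
      rw [hAB]
      have h11 : (x - u) * (x - v) - (θ i - u) * (θ i - v)
          = (x - θ i) * (x + θ i - u - v) := by ring
      linarith [hup, h11]
    rw [abs_le]
    constructor
    · have h12 : 0 ≤ c * -((x - u) * (x - v)) :=
        mul_nonneg hc0'.le (neg_nonneg.2 hlow)
      have h13 : c * -((x - u) * (x - v)) = -(c * ((x - u) * (x - v))) := by ring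
      linarith [h12, h13]
    · have h14 : 0 ≤ c * ((x - u) * (x - v) + A * B) :=
        mul_nonneg hc0'.le (by linarith)
      have h15 : c * ((x - u) * (x - v) + A * B)
          = c * ((x - u) * (x - v)) + c * (A * B) := by ring
      linarith [h14, h15, hcab]
  have hptwise : ∀ s ∈ Finset.Icc (-(p:ℤ)) p,
      a s * (-1 - c * ((θ (i + s) - u) * (θ (i + s) - v))) ≤ |a s| := by
    intro s hs
    calc a s * (-1 - c * ((θ (i + s) - u) * (θ (i + s) - v)))
        ≤ |a s * (-1 - c * ((θ (i + s) - u) * (θ (i + s) - v)))| := le_abs_self _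
      _ = |a s| * |(-1 - c * ((θ (i + s) - u) * (θ (i + s) - v)))| := abs_mul _ _
      _ ≤ |a s| * 1 := mul_le_mul_of_nonneg_left (hq_bound s hs) (abs_nonneg _)
      _ = |a s| := mul_one _
  have hsum_q : ∑ s ∈ Finset.Icc (-(p:ℤ)) p,
      a s * (-1 - c * ((θ (i + s) - u) * (θ (i + s) - v)))
      = 1 + 2 * θbar2 / (A * B) := by
    have step : ∀ s ∈ Finset.Icc (-(p:ℤ)) p,
        a s * (-1 - c * ((θ (i + s) - u) * (θ (i + s) - v)))
        = (-1 - c * (u * v)) * a s + (c * (u + v)) * (a s * θ (i + s))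
          + (-c) * (a s * θ (i + s) ^ 2) := by
      intro s _; ring
    rw [Finset.sum_congr rfl step]
    simp only [Finset.sum_add_distrib]
    rw [← Finset.mul_sum, ← Finset.mul_sum, ← Finset.mul_sum, hc0, hc1, hc2]
    rw [hθbar2, hc]
    field_simp
    linear_combination (-2) * hAB
  rw [hLHSval, ← hsum_q]
  exact Finset.sum_le_sum hptwise
end

section
/- Let m ≥ 2 be an integer, let t : ℤ → ℝ be strictly increasing, and let i ∈ ℤ. Set ω_i = Σ_{i+1−m ≤ r < s ≤ i} (t_r − t_s)², a_i = −(1/(m−1)) ω_i / ((t_i − t_{i−m})(t_{i+1} − t_{i−m})), c_i = −(1/(m−1)) ω_i / ((t_{i+1} − t_{i−m})(t_{i+1} − t_{i+1−m})), and b_i = 1 − a_i − c_i. Then |a_i| + |b_i| + |c_i| ≤ 2⌊m/2⌋ + 3 (i.e., ≤ m + 2 for m odd and ≤ m + 3 for m even). -/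
lemma ico_ins (r s : ℤ) (h : r ≤ s) :
    Finset.Ico r (s + 1) = insert s (Finset.Ico r s) := by
  ext j; simp only [Finset.mem_Ico, Finset.mem_insert]; omega

lemma tele' (t : ℤ → ℝ) (r : ℤ) : ∀ s : ℤ, r ≤ s →
    ∑ j ∈ Finset.Ico r s, (t (j+1) - t j) = t s - t r := by
  refine Int.le_induction ?_ ?_
  · simp
  · intro s hs ih
    rw [ico_ins r s hs, Finset.sum_insert (by simp), ih]
    ring

lemma intAux (k p q m : ℤ) (hk : 0 ≤ k) (hme : m = 2*k ∨ m = 2*k+1)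
    (hp : 1 ≤ p) (hq : 1 ≤ q) (hpq : p + q = m) : p * q ≤ k * (m - k) := by
  rcases hme with h | h
  · nlinarith [sq_nonneg (k - p)]
  · rcases le_or_gt p k with h2 | h2
    · nlinarith
    · have : k + 1 ≤ p := h2
      nlinarith

lemma omega_bound (m : ℕ) (hm : 2 ≤ m) (t : ℤ → ℝ) (ht : StrictMono t) (i : ℤ) :
    (∑ r ∈ Finset.Icc (i + 1 - m) i, ∑ s ∈ Finset.Icc (i + 1 - m) i,
        if r < s then (t r - t s) ^ 2 else 0)
    ≤ ((m / 2 : ℕ) : ℝ) * ((m : ℝ) - ((m / 2 : ℕ) : ℝ)) *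
        ((t i - t (i + 1 - m)) * (t i - t (i + 1 - m))) := by
  set lo : ℤ := i + 1 - m with hlo
  set I : Finset ℤ := Finset.Icc lo i with hI
  set J : Finset ℤ := Finset.Ico lo i with hJ
  set d : ℤ → ℝ := fun j => t (j + 1) - t j with hd
  set L : ℝ := t i - t lo with hLdef
  set K : ℝ := ((m / 2 : ℕ) : ℝ) * ((m : ℝ) - ((m / 2 : ℕ) : ℝ)) with hK
  have hloi : lo < i := by omega
  have hLpos : 0 < L := sub_pos.2 (ht hloi)
  have hdpos : ∀ j, 0 < d j := fun j => sub_pos.2 (ht (by omega))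
  -- pointwise bound
  have pointwise : ∀ r ∈ I, ∀ s ∈ I,
      (if r < s then (t r - t s) ^ 2 else 0)
        ≤ ∑ j ∈ J, (if r ≤ j ∧ j < s then L * d j else 0) := by
    intro r hr s hs
    rw [hI, Finset.mem_Icc] at hr hs
    rw [← Finset.sum_filter]
    have hfil : J.filter (fun j => r ≤ j ∧ j < s) = Finset.Ico r s := by
      ext j
      simp only [hJ, Finset.mem_filter, Finset.mem_Ico]
      omega
    rw [hfil, ← Finset.mul_sum]
    split_ifs with h
    · rw [tele' t r s h.le]
      have h1 : t s - t r ≤ L := by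
        have := ht.monotone hs.2
        have := ht.monotone hr.1
        simp only [hLdef]
        linarith
      have h2 : 0 < t s - t r := sub_pos.2 (ht h)
      nlinarith
    · rw [Finset.Ico_eq_empty (by omega), Finset.sum_empty, mul_zero]
  have step1 : (∑ r ∈ I, ∑ s ∈ I, if r < s then (t r - t s) ^ 2 else 0)
      ≤ ∑ r ∈ I, ∑ s ∈ I, ∑ j ∈ J, (if r ≤ j ∧ j < s then L * d j else 0) := by
    refine Finset.sum_le_sum fun r hr => ?_
    refine le_trans (Finset.sum_le_sum fun s hs => pointwise r hr s hs) le_rfl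
  have swap : (∑ r ∈ I, ∑ s ∈ I, ∑ j ∈ J, if r ≤ j ∧ j < s then L * d j else 0)
      = ∑ j ∈ J, ∑ r ∈ I, ∑ s ∈ I, (if r ≤ j ∧ j < s then L * d j else 0) := by
    calc (∑ r ∈ I, ∑ s ∈ I, ∑ j ∈ J, if r ≤ j ∧ j < s then L * d j else 0)
        = ∑ r ∈ I, ∑ j ∈ J, ∑ s ∈ I, (if r ≤ j ∧ j < s then L * d j else 0) :=
          Finset.sum_congr rfl fun r _ => Finset.sum_comm
      _ = ∑ j ∈ J, ∑ r ∈ I, ∑ s ∈ I, (if r ≤ j ∧ j < s then L * d j else 0) :=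
          Finset.sum_comm
  -- inner counting bound
  have inner : ∀ j ∈ J, (∑ r ∈ I, ∑ s ∈ I, if r ≤ j ∧ j < s then L * d j else 0)
      ≤ K * (L * d j) := by
    intro j hj
    rw [hJ, Finset.mem_Ico] at hj
    have e1 : (∑ r ∈ I, ∑ s ∈ I, if r ≤ j ∧ j < s then L * d j else 0)
        = ∑ r ∈ I, (if r ≤ j then ∑ s ∈ I, (if j < s then L * d j else 0) else 0) := by
      refine Finset.sum_congr rfl fun r _ => ?_
      split_ifs with h
      · exact Finset.sum_congr rfl fun s _ => by simp [h]
      · simp [h]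
    rw [e1]
    have e2 : (∑ s ∈ I, if j < s then L * d j else 0)
        = ((I.filter (fun s => j < s)).card : ℝ) * (L * d j) := by
      rw [← Finset.sum_filter, Finset.sum_const, nsmul_eq_mul]
    have e3 : (∑ r ∈ I, if r ≤ j then ((I.filter (fun s => j < s)).card : ℝ) * (L * d j) else 0)
        = ((I.filter (fun r => r ≤ j)).card : ℝ) *
            (((I.filter (fun s => j < s)).card : ℝ) * (L * d j)) := by
      rw [← Finset.sum_filter, Finset.sum_const, nsmul_eq_mul]
    simp only [e2]
    rw [e3]
    have hfr : I.filter (fun r => r ≤ j) = Finset.Icc lo j := by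
      ext x; simp only [hI, Finset.mem_filter, Finset.mem_Icc]; omega
    have hfs : I.filter (fun s => j < s) = Finset.Icc (j + 1) i := by
      ext x; simp only [hI, Finset.mem_filter, Finset.mem_Icc]; omega
    rw [hfr, hfs, Int.card_Icc, Int.card_Icc]
    have hc1' : (((j + 1 - lo).toNat : ℕ) : ℤ) = j + 1 - lo := Int.toNat_of_nonneg (by omega)
    have hc2' : (((i + 1 - (j + 1)).toNat : ℕ) : ℤ) = i - j := by omega
    have hcast1 : (((j + 1 - lo).toNat : ℕ) : ℝ) = ((j + 1 - lo : ℤ) : ℝ) := by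
      exact_mod_cast congrArg (Int.cast : ℤ → ℝ) hc1'
    have hcast2 : (((i + 1 - (j + 1)).toNat : ℕ) : ℝ) = ((i - j : ℤ) : ℝ) := by
      exact_mod_cast congrArg (Int.cast : ℤ → ℝ) hc2'
    rw [hcast1, hcast2]
    have hkk : ((m : ℤ) = 2 * ((m / 2 : ℕ) : ℤ) ∨ (m : ℤ) = 2 * ((m / 2 : ℕ) : ℤ) + 1) := by
      omega
    have hZ : (j + 1 - lo) * (i - j) ≤ ((m / 2 : ℕ) : ℤ) * ((m : ℤ) - ((m / 2 : ℕ) : ℤ)) :=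
      intAux _ _ _ (m : ℤ) (by positivity) hkk (by omega) (by omega) (by omega)
    have hR : ((j + 1 - lo : ℤ) : ℝ) * ((i - j : ℤ) : ℝ) ≤ K := by
      rw [hK]
      have hZR := (@Int.cast_le ℝ _ _ _).mpr hZ
      simp only [Int.cast_mul, Int.cast_sub, Int.cast_natCast] at hZR
      push_cast
      push_cast at hZR
      linarith [hZR]
    have hpos : 0 ≤ L * d j := le_of_lt (mul_pos hLpos (hdpos j))
    calc ((j + 1 - lo : ℤ) : ℝ) * (((i - j : ℤ) : ℝ) * (L * d j))
        = (((j + 1 - lo : ℤ) : ℝ) * ((i - j : ℤ) : ℝ)) * (L * d j) := by ring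
      _ ≤ K * (L * d j) := mul_le_mul_of_nonneg_right hR hpos
  -- conclude
  have last : (∑ j ∈ J, K * (L * d j)) = K * (L * L) := by
    rw [← Finset.mul_sum, ← Finset.mul_sum, tele' t lo i hloi.le, ← hLdef]
  calc (∑ r ∈ I, ∑ s ∈ I, if r < s then (t r - t s) ^ 2 else 0)
      ≤ ∑ r ∈ I, ∑ s ∈ I, ∑ j ∈ J, (if r ≤ j ∧ j < s then L * d j else 0) := step1
    _ = ∑ j ∈ J, ∑ r ∈ I, ∑ s ∈ I, (if r ≤ j ∧ j < s then L * d j else 0) := swap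
    _ ≤ ∑ j ∈ J, K * (L * d j) := Finset.sum_le_sum inner
    _ = K * (L * L) := last

lemma arith2 (k x : ℝ) (hk1 : 1 ≤ k) (hcase : x = 2 * k ∨ x = 2 * k + 1) :
    2 * (k * (x - k)) ≤ (k + 1) * (x - 1) := by
  rcases hcase with h | h <;> subst h <;> nlinarith

/-- Theorem 6 of the paper (analytic content): the coefficients of the
Goodman–Sharma type integral quasi-interpolant `G₂` satisfy
`|a_i| + |b_i| + |c_i| ≤ 2⌊m/2⌋ + 3`, uniformly in the partition. -/
theorem stmt_9 (m : ℕ) (hm : 2 ≤ m) (t : ℤ → ℝ) (ht : StrictMono t) (i : ℤ)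
    (ω a b c : ℝ)
    (hω : ω = ∑ r ∈ Finset.Icc (i + 1 - m) i, ∑ s ∈ Finset.Icc (i + 1 - m) i,
        if r < s then (t r - t s) ^ 2 else 0)
    (ha : a = -(1 / ((m : ℝ) - 1)) * ω /
      ((t i - t (i - m)) * (t (i + 1) - t (i - m))))
    (hc : c = -(1 / ((m : ℝ) - 1)) * ω /
      ((t (i + 1) - t (i - m)) * (t (i + 1) - t (i + 1 - m))))
    (hb : b = 1 - a - c) :
    |a| + |b| + |c| ≤ ((2 * (m / 2) + 3 : ℕ) : ℝ) := by
  have hm2 : (2 : ℝ) ≤ (m : ℝ) := by exact_mod_cast hm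
  have hm1 : (0 : ℝ) < (m : ℝ) - 1 := by linarith
  set A : ℝ := t i - t (i - m) with hAdef
  set B : ℝ := t (i + 1) - t (i - m) with hBdef
  set C : ℝ := t (i + 1) - t (i + 1 - m) with hCdef
  set L : ℝ := t i - t (i + 1 - m) with hLdef
  set k : ℝ := ((m / 2 : ℕ) : ℝ) with hkdef
  have hA : 0 < A := sub_pos.2 (ht (by omega))
  have hB : 0 < B := sub_pos.2 (ht (by omega))
  have hC : 0 < C := sub_pos.2 (ht (by omega))
  have hL : 0 < L := sub_pos.2 (ht (by omega))
  have hLA : L ≤ A := by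
    have := ht (show i - (m : ℤ) < i + 1 - m by omega)
    simp only [hAdef, hLdef]; linarith
  have hLB : L ≤ B := by
    have h1 := ht (show i - (m : ℤ) < i + 1 - m by omega)
    have h2 := ht (show i < i + 1 by omega)
    simp only [hBdef, hLdef]; linarith
  have hLC : L ≤ C := by
    have h2 := ht (show i < i + 1 by omega)
    simp only [hCdef, hLdef]; linarith
  have hω0 : 0 ≤ ω := by
    rw [hω]
    refine Finset.sum_nonneg fun r _ => Finset.sum_nonneg fun s _ => ?_
    split_ifs
    · positivity
    · exact le_rfl
  have hωK : ω ≤ k * ((m : ℝ) - k) * (L * L) := by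
    rw [hω, hkdef, hLdef]
    exact omega_bound m hm t ht i
  have hK0 : 0 ≤ k * ((m : ℝ) - k) := by
    have h1 : (0 : ℝ) ≤ k := by rw [hkdef]; positivity
    have h2 : k ≤ (m : ℝ) := by
      rw [hkdef]; exact_mod_cast Nat.div_le_self m 2
    nlinarith
  have ha0 : a ≤ 0 := by
    rw [ha]
    apply div_nonpos_of_nonpos_of_nonneg
    · have h1 : (0 : ℝ) ≤ 1 / ((m : ℝ) - 1) := by positivity
      nlinarith
    · exact (mul_pos hA hB).le
  have hc0 : c ≤ 0 := by
    rw [hc]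
    apply div_nonpos_of_nonpos_of_nonneg
    · have h1 : (0 : ℝ) ≤ 1 / ((m : ℝ) - 1) := by positivity
      nlinarith
    · exact (mul_pos hB hC).le
  have haeq : (-a) * (((m : ℝ) - 1) * (A * B)) = ω := by
    rw [ha]
    field_simp
  have hceq : (-c) * (((m : ℝ) - 1) * (B * C)) = ω := by
    rw [hc]
    field_simp
  -- (-a) * (m-1) ≤ k*(m-k), (-c) * (m-1) ≤ k*(m-k)
  have hLLAB : L * L ≤ A * B := mul_le_mul hLA hLB hL.le hA.le
  have hLLBC : L * L ≤ B * C := mul_le_mul hLB hLC hL.le hB.le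
  have hbnda : (-a) * ((m : ℝ) - 1) ≤ k * ((m : ℝ) - k) := by
    have hna : 0 ≤ -a := neg_nonneg.2 ha0
    have h1 : (-a) * (((m : ℝ) - 1) * (L * L)) ≤ (-a) * (((m : ℝ) - 1) * (A * B)) :=
      mul_le_mul_of_nonneg_left (mul_le_mul_of_nonneg_left hLLAB hm1.le) hna
    have h3 : ((-a) * ((m : ℝ) - 1)) * (L * L) ≤ (k * ((m : ℝ) - k)) * (L * L) := by
      have e : ((-a) * ((m : ℝ) - 1)) * (L * L) = (-a) * (((m : ℝ) - 1) * (L * L)) := by ring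
      rw [e]
      exact h1.trans (le_of_eq_of_le haeq hωK)
    exact le_of_mul_le_mul_right h3 (mul_pos hL hL)
  have hbndc : (-c) * ((m : ℝ) - 1) ≤ k * ((m : ℝ) - k) := by
    have hnc : 0 ≤ -c := neg_nonneg.2 hc0
    have h1 : (-c) * (((m : ℝ) - 1) * (L * L)) ≤ (-c) * (((m : ℝ) - 1) * (B * C)) :=
      mul_le_mul_of_nonneg_left (mul_le_mul_of_nonneg_left hLLBC hm1.le) hnc
    have h3 : ((-c) * ((m : ℝ) - 1)) * (L * L) ≤ (k * ((m : ℝ) - k)) * (L * L) := by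
      have e : ((-c) * ((m : ℝ) - 1)) * (L * L) = (-c) * (((m : ℝ) - 1) * (L * L)) := by ring
      rw [e]
      exact h1.trans (le_of_eq_of_le hceq hωK)
    exact le_of_mul_le_mul_right h3 (mul_pos hL hL)
  -- arithmetic: 2 k (m-k) ≤ (k+1)(m-1)
  have hcase : (m : ℝ) = 2 * k ∨ (m : ℝ) = 2 * k + 1 := by
    rw [hkdef]
    have : m = 2 * (m / 2) ∨ m = 2 * (m / 2) + 1 := by omega
    rcases this with h | h
    · left; exact_mod_cast congrArg (Nat.cast : ℕ → ℝ) h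
    · right; exact_mod_cast congrArg (Nat.cast : ℕ → ℝ) h
  have hk1 : (1 : ℝ) ≤ k := by
    rw [hkdef]
    have : 1 ≤ m / 2 := by omega
    exact_mod_cast this
  have harith : 2 * (k * ((m : ℝ) - k)) ≤ (k + 1) * ((m : ℝ) - 1) :=
    arith2 k (m : ℝ) hk1 hcase
  have hsum : (-a) + (-c) ≤ k + 1 := by
    have h3 : ((-a) + (-c)) * ((m : ℝ) - 1) ≤ (k + 1) * ((m : ℝ) - 1) := by
      have e : ((-a) + (-c)) * ((m : ℝ) - 1)
          = (-a) * ((m : ℝ) - 1) + (-c) * ((m : ℝ) - 1) := by ring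
      rw [e]
      linarith [hbnda, hbndc, harith]
    exact le_of_mul_le_mul_right h3 hm1
  have hb0 : 0 ≤ b := by rw [hb]; linarith
  rw [abs_of_nonpos ha0, abs_of_nonpos hc0, abs_of_nonneg hb0, hb]
  have hgoal : ((2 * (m / 2) + 3 : ℕ) : ℝ) = 2 * k + 3 := by
    rw [hkdef]; push_cast; ring
  rw [hgoal]
  linarith
end

section
/- Let m ≥ 2 be an integer, let t : ℤ → ℝ be strictly increasing, and let i ∈ ℤ. Define θ_j = (1/m) Σ_{r=1}^{m} t_{j+1−r}, θ_i^{(2)} = (2/(m(m−1))) Σ_{i+1−m ≤ r < s ≤ i} t_r t_s, and μ_j^{(2)} = (2/(m(m+1))) Σ_{j+1−m ≤ r ≤ s ≤ j} t_r t_s. Set ω_i = Σ_{i+1−m ≤ r < s ≤ i} (t_r − t_s)², a_i = −(1/(m−1)) ω_i / ((t_i − t_{i−m})(t_{i+1} − t_{i−m})), c_i = −(1/(m−1)) ω_i / ((t_{i+1} − t_{i−m})(t_{i+1} − t_{i+1−m})), b_i = 1 − a_i − c_i. Then a_i + b_i + c_i = 1, θ_{i−1} a_i + θ_i b_i + θ_{i+1}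 c_i = θ_i, and μ_{i−1}^{(2)} a_i + μ_i^{(2)} b_i + μ_{i+1}^{(2)} c_i = θ_i^{(2)}. -/
lemma reindex (t : ℤ → ℝ) (m : ℕ) (j : ℤ) :
    ∑ r ∈ Finset.Icc 1 m, t (j + 1 - (r : ℤ)) = ∑ r ∈ Finset.Icc (j + 1 - (m : ℤ)) j, t r := by
  refine Finset.sum_nbij' (i := fun r => j + 1 - (r : ℤ)) (j := fun s => (j + 1 - s).toNat)
    ?_ ?_ ?_ ?_ ?_
  · intro x hx; simp only [Finset.mem_Icc] at *; omega
  · intro x hx; simp only [Finset.mem_Icc] at *; omega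
  · intro x hx; simp only [Finset.mem_Icc] at *; omega
  · intro x hx; simp only [Finset.mem_Icc] at *; omega
  · intro x hx; rfl

lemma shift_sum (f : ℤ → ℝ) (m : ℕ) (hm : 1 ≤ m) (j : ℤ) :
    ∑ r ∈ Finset.Icc (j - (m : ℤ)) (j - 1), f r
      = (∑ r ∈ Finset.Icc (j + 1 - (m : ℤ)) j, f r) - f j + f (j - m) := by
  have h1 : Finset.Icc (j + 1 - (m : ℤ)) j = insert j (Finset.Icc (j + 1 - (m : ℤ)) (j - 1)) := by
    ext x; simp only [Finset.mem_Icc, Finset.mem_insert]; omega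
  have h2 : Finset.Icc (j - (m : ℤ)) (j - 1)
      = insert (j - m) (Finset.Icc (j + 1 - (m : ℤ)) (j - 1)) := by
    ext x; simp only [Finset.mem_Icc, Finset.mem_insert]; omega
  rw [h1, h2, Finset.sum_insert (by simp only [Finset.mem_Icc]; omega),
    Finset.sum_insert (by simp only [Finset.mem_Icc]; omega)]
  ring

lemma double_ndiag (F : Finset ℤ) (f : ℤ → ℤ → ℝ) (hsym : ∀ r s, f r s = f s r) :
    2 * (∑ r ∈ F, ∑ s ∈ F, if r < s then f r s else 0)
      = (∑ r ∈ F, ∑ s ∈ F, f r s) - ∑ r ∈ F, f r r := by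
  have key : (∑ r ∈ F, ∑ s ∈ F, f r s)
      = (∑ r ∈ F, ∑ s ∈ F, if r < s then f r s else 0)
        + (∑ r ∈ F, ∑ s ∈ F, if s < r then f r s else 0)
        + (∑ r ∈ F, ∑ s ∈ F, if r = s then f r s else 0) := by
    rw [← Finset.sum_add_distrib, ← Finset.sum_add_distrib]
    refine Finset.sum_congr rfl fun r _ => ?_
    rw [← Finset.sum_add_distrib, ← Finset.sum_add_distrib]
    refine Finset.sum_congr rfl fun s _ => ?_
    rcases lt_trichotomy r s with h | h | h
    · simp [h, asymm h, h.ne]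
    · subst h; simp
    · simp [h, asymm h, h.ne']
  have hswap : (∑ r ∈ F, ∑ s ∈ F, if s < r then f r s else 0)
      = ∑ r ∈ F, ∑ s ∈ F, if r < s then f r s else 0 := by
    rw [Finset.sum_comm]
    exact Finset.sum_congr rfl fun r _ => Finset.sum_congr rfl fun s _ => by rw [hsym]
  have hdiag : (∑ r ∈ F, ∑ s ∈ F, if r = s then f r s else 0) = ∑ r ∈ F, f r r := by
    refine Finset.sum_congr rfl fun r hr => ?_
    simp [Finset.sum_ite_eq, hr]
  rw [hswap, hdiag] at key
  linarith

lemma Qlt_eq (F : Finset ℤ) (t : ℤ → ℝ) :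
    ∑ r ∈ F, ∑ s ∈ F, (if r < s then t r * t s else 0)
      = ((∑ r ∈ F, t r) ^ 2 - ∑ r ∈ F, (t r) ^ 2) / 2 := by
  have h := double_ndiag F (fun r s => t r * t s) (fun r s => mul_comm _ _)
  have hsq : (∑ r ∈ F, ∑ s ∈ F, t r * t s) = (∑ r ∈ F, t r) ^ 2 := by
    rw [sq, Finset.sum_mul_sum]
  have hd : (∑ r ∈ F, t r * t r) = ∑ r ∈ F, (t r) ^ 2 :=
    Finset.sum_congr rfl fun r _ => (sq (t r)).symm
  rw [hsq, hd] at h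
  linarith

lemma Qle_eq (F : Finset ℤ) (t : ℤ → ℝ) :
    ∑ r ∈ F, ∑ s ∈ F, (if r ≤ s then t r * t s else 0)
      = ((∑ r ∈ F, t r) ^ 2 + ∑ r ∈ F, (t r) ^ 2) / 2 := by
  have hsplit : ∑ r ∈ F, ∑ s ∈ F, (if r ≤ s then t r * t s else 0)
      = (∑ r ∈ F, ∑ s ∈ F, (if r < s then t r * t s else 0))
        + ∑ r ∈ F, ∑ s ∈ F, (if r = s then t r * t s else 0) := by
    rw [← Finset.sum_add_distrib]
    refine Finset.sum_congr rfl fun r _ => ?_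
    rw [← Finset.sum_add_distrib]
    refine Finset.sum_congr rfl fun s _ => ?_
    rcases lt_trichotomy r s with h | h | h
    · simp [h, h.le, h.ne]
    · subst h; simp
    · simp [h, asymm h, h.ne', not_le_of_gt h]
  have hdiag : (∑ r ∈ F, ∑ s ∈ F, if r = s then t r * t s else 0) = ∑ r ∈ F, (t r) ^ 2 := by
    refine Finset.sum_congr rfl fun r hr => ?_
    simp [Finset.sum_ite_eq, hr, sq]
  rw [hsplit, hdiag, Qlt_eq]
  ring

lemma W_eq (F : Finset ℤ) (t : ℤ → ℝ) :
    ∑ r ∈ F, ∑ s ∈ F, (if r < s then (t r - t s) ^ 2 else 0)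
      = (F.card : ℝ) * (∑ r ∈ F, (t r) ^ 2) - (∑ r ∈ F, t r) ^ 2 := by
  have h := double_ndiag F (fun r s => (t r - t s) ^ 2) (fun r s => by ring)
  have inner : ∀ r : ℤ, (∑ s ∈ F, (t r - t s) ^ 2)
      = (F.card : ℝ) * t r ^ 2 + (∑ s ∈ F, t s ^ 2) - 2 * t r * (∑ s ∈ F, t s) := by
    intro r
    rw [Finset.sum_congr rfl
      (fun s _ => show (t r - t s) ^ 2 = t r ^ 2 + t s ^ 2 - 2 * t r * t s by ring)]
    rw [Finset.sum_sub_distrib, Finset.sum_add_distrib, Finset.sum_const, ← Finset.mul_sum,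
      nsmul_eq_mul]
  have htot : (∑ r ∈ F, ∑ s ∈ F, (t r - t s) ^ 2)
      = 2 * ((F.card : ℝ) * (∑ r ∈ F, (t r) ^ 2) - (∑ r ∈ F, t r) ^ 2) := by
    rw [Finset.sum_congr rfl fun r _ => inner r]
    rw [Finset.sum_sub_distrib, Finset.sum_add_distrib, ← Finset.mul_sum, Finset.sum_const,
      nsmul_eq_mul]
    have : (∑ r ∈ F, 2 * t r * (∑ s ∈ F, t s)) = 2 * (∑ r ∈ F, t r) ^ 2 := by
      rw [← Finset.sum_mul, ← Finset.mul_sum]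
      ring
    rw [this]; ring
  have hdiag : (∑ r ∈ F, (t r - t r) ^ 2) = 0 := by simp
  rw [htot, hdiag] at h
  linarith

set_option maxHeartbeats 2000000 in
/-- Derivation inside the proof of Theorem 6: the explicit coefficients
`(a_i, b_i, c_i)` solve the 3×3 linear system expressing that the
Goodman–Sharma type integral quasi-interpolant `G₂` reproduces all
polynomials of degree ≤ 2. -/
theorem stmt_10 (m : ℕ) (hm : 2 ≤ m) (t : ℤ → ℝ) (ht : StrictMono t) (i : ℤ)
    (θ : ℤ → ℝ)
    (hθ : ∀ j : ℤ, θ j = (1 / (m : ℝ)) * ∑ r ∈ Finset.Icc 1 m, t (j + 1 - r))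
    (θ2 : ℝ)
    (hθ2 : θ2 = (2 / ((m : ℝ) * ((m : ℝ) - 1))) *
      ∑ r ∈ Finset.Icc (i + 1 - m) i, ∑ s ∈ Finset.Icc (i + 1 - m) i,
        if r < s then t r * t s else 0)
    (μ2 : ℤ → ℝ)
    (hμ2 : ∀ j : ℤ, μ2 j = (2 / ((m : ℝ) * ((m : ℝ) + 1))) *
      ∑ r ∈ Finset.Icc (j + 1 - m) j, ∑ s ∈ Finset.Icc (j + 1 - m) j,
        if r ≤ s then t r * t s else 0)
    (ω a b c : ℝ)
    (hω : ω = ∑ r ∈ Finset.Icc (i + 1 - m) i, ∑ s ∈ Finset.Icc (i + 1 - m) i,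
        if r < s then (t r - t s) ^ 2 else 0)
    (ha : a = -(1 / ((m : ℝ) - 1)) * ω /
      ((t i - t (i - m)) * (t (i + 1) - t (i - m))))
    (hc : c = -(1 / ((m : ℝ) - 1)) * ω /
      ((t (i + 1) - t (i - m)) * (t (i + 1) - t (i + 1 - m))))
    (hb : b = 1 - a - c) :
    a + b + c = 1 ∧
    θ (i - 1) * a + θ i * b + θ (i + 1) * c = θ i ∧
    μ2 (i - 1) * a + μ2 i * b + μ2 (i + 1) * c = θ2 := by
  have hmR : (2 : ℝ) ≤ m := by exact_mod_cast hm
  have hm0 : (m : ℝ) ≠ 0 := by linarith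
  have hmm1 : (m : ℝ) - 1 ≠ 0 := by linarith
  have hmp1 : (m : ℝ) + 1 ≠ 0 := by linarith
  have h31 : t i - t (i - m) ≠ 0 := ne_of_gt (sub_pos.2 (ht (by omega)))
  have h41 : t (i + 1) - t (i - m) ≠ 0 := ne_of_gt (sub_pos.2 (ht (by omega)))
  have h42 : t (i + 1) - t (i + 1 - m) ≠ 0 := ne_of_gt (sub_pos.2 (ht (by omega)))
  have hcard : ((Finset.Icc (i + 1 - (m : ℤ)) i).card : ℝ) = m := by
    have h : (Finset.Icc (i + 1 - (m : ℤ)) i).card = m := by rw [Int.card_Icc]; omega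
    rw [h]
  have e1 : i + 1 - 1 = i := by ring
  have e2 : i - 1 + 1 - (m : ℤ) = i - (m : ℤ) := by ring
  set P := ∑ r ∈ Finset.Icc (i + 1 - (m : ℤ)) i, t r with hP
  set R := ∑ r ∈ Finset.Icc (i + 1 - (m : ℤ)) i, t r ^ 2 with hR
  have hω' : ω = (m : ℝ) * R - P ^ 2 := by
    rw [hω, W_eq, hcard, ← hP, ← hR]
  have hθi : θ i = 1 / (m : ℝ) * P := by
    rw [hθ i, reindex, ← hP]
  have hθm : θ (i - 1) = 1 / (m : ℝ) * (P - t i + t (i - m)) := by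
    rw [hθ (i - 1), reindex, e2, shift_sum t m (by omega) i, ← hP]
  have hPp : (∑ r ∈ Finset.Icc (i + 1 + 1 - (m : ℤ)) (i + 1), t r)
      = P + t (i + 1) - t (i + 1 - m) := by
    have h := shift_sum t m (by omega) (i + 1)
    rw [e1, ← hP] at h
    linarith
  have hθp : θ (i + 1) = 1 / (m : ℝ) * (P + t (i + 1) - t (i + 1 - m)) := by
    rw [hθ (i + 1), reindex, hPp]
  have hRm : (∑ r ∈ Finset.Icc (i - (m : ℤ)) (i - 1), t r ^ 2)
      = R - t i ^ 2 + t (i - m) ^ 2 := by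
    rw [shift_sum (fun r => t r ^ 2) m (by omega) i, ← hR]
  have hRp : (∑ r ∈ Finset.Icc (i + 1 + 1 - (m : ℤ)) (i + 1), t r ^ 2)
      = R + t (i + 1) ^ 2 - t (i + 1 - m) ^ 2 := by
    have h := shift_sum (fun r => t r ^ 2) m (by omega) (i + 1)
    rw [e1, ← hR] at h
    linarith
  have hμi : μ2 i = 2 / ((m : ℝ) * ((m : ℝ) + 1)) * ((P ^ 2 + R) / 2) := by
    rw [hμ2 i, Qle_eq, ← hP, ← hR]
  have hμm : μ2 (i - 1) = 2 / ((m : ℝ) * ((m : ℝ) + 1)) *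
      (((P - t i + t (i - m)) ^ 2 + (R - t i ^ 2 + t (i - m) ^ 2)) / 2) := by
    rw [hμ2 (i - 1), Qle_eq, e2, shift_sum t m (by omega) i, hRm, ← hP]
  have hμp : μ2 (i + 1) = 2 / ((m : ℝ) * ((m : ℝ) + 1)) *
      (((P + t (i + 1) - t (i + 1 - m)) ^ 2 + (R + t (i + 1) ^ 2 - t (i + 1 - m) ^ 2)) / 2) := by
    rw [hμ2 (i + 1), Qle_eq, hPp, hRp]
  have hθ2' : θ2 = 2 / ((m : ℝ) * ((m : ℝ) - 1)) * ((P ^ 2 - R) / 2) := by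
    rw [hθ2, Qlt_eq, ← hP, ← hR]
  refine ⟨by rw [hb]; ring, ?_, ?_⟩
  · rw [hθi, hθm, hθp, hb, ha, hc, hω']
    field_simp
    ring
  · rw [hμi, hμm, hμp, hθ2', hb, ha, hc, hω']
    field_simp
    ring
end

section
/- Let m ≥ 2 be an integer and x_1, …, x_m real numbers. Then (2/(m(m+1))) Σ_{1≤r≤s≤m} x_r x_s − (2/(m(m−1))) Σ_{1≤r<s≤m} x_r x_s = (2/(m(m²−1))) Σ_{1≤r<s≤m} (x_r − x_s)². In particular, if the x_r are not all equal, this quantity is strictly positive. -/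
/-- Identity from the proof of Theorem 6: the difference `μ⁽²⁾ - θ⁽²⁾` of the
normalized second moments equals a positive multiple of the sum of squared
differences, and is strictly positive when the `x_r` are not all equal. -/
theorem stmt_11 (m : ℕ) (hm : 2 ≤ m) (x : ℕ → ℝ) :
    (2 / ((m : ℝ) * ((m : ℝ) + 1))) *
        (∑ r ∈ Finset.Icc 1 m, ∑ s ∈ Finset.Icc 1 m,
          if r ≤ s then x r * x s else 0)
      - (2 / ((m : ℝ) * ((m : ℝ) - 1))) *
        (∑ r ∈ Finset.Icc 1 m, ∑ s ∈ Finset.Icc 1 m,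
          if r < s then x r * x s else 0)
    = (2 / ((m : ℝ) * ((m : ℝ) ^ 2 - 1))) *
        (∑ r ∈ Finset.Icc 1 m, ∑ s ∈ Finset.Icc 1 m,
          if r < s then (x r - x s) ^ 2 else 0)
    ∧ ((∃ r ∈ Finset.Icc 1 m, ∃ s ∈ Finset.Icc 1 m, x r ≠ x s) →
        0 < (2 / ((m : ℝ) * ((m : ℝ) ^ 2 - 1))) *
          (∑ r ∈ Finset.Icc 1 m, ∑ s ∈ Finset.Icc 1 m,
            if r < s then (x r - x s) ^ 2 else 0)) := by
  set T := Finset.Icc 1 m with hT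
  have hcard : (T.card : ℝ) = m := by simp [hT]
  have hm' : (2 : ℝ) ≤ (m : ℝ) := by exact_mod_cast hm
  set A := ∑ r ∈ T, x r ^ 2 with hA
  set P := ∑ r ∈ T, ∑ s ∈ T, (if r < s then x r * x s else 0) with hP
  -- the ≤ sum equals P + A
  have h1 : (∑ r ∈ T, ∑ s ∈ T, if r ≤ s then x r * x s else 0) = P + A := by
    rw [hP, hA, ← Finset.sum_add_distrib]
    refine Finset.sum_congr rfl fun r hr => ?_
    have : (∑ s ∈ T, if r ≤ s then x r * x s else 0)
        = ∑ s ∈ T, ((if r < s then x r * x s else 0) + (if r = s then x r * x s else 0)) := by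
      refine Finset.sum_congr rfl fun s hs => ?_
      rcases lt_trichotomy r s with h | h | h
      · simp [h, le_of_lt h, ne_of_lt h]
      · simp [h]
      · simp [not_le.mpr h, ne_of_gt h, not_lt.mpr (le_of_lt h)]
    rw [this, Finset.sum_add_distrib]
    congr 1
    rw [Finset.sum_ite_eq T r (fun s => x r * x s)]
    simp [hr, sq]
  -- the squared-difference sum equals (m-1) A - 2 P
  have h2 : (∑ r ∈ T, ∑ s ∈ T, if r < s then (x r - x s) ^ 2 else 0)
      = ((m : ℝ) - 1) * A - 2 * P := by
    have split3 : (∑ r ∈ T, ∑ s ∈ T, if r < s then (x r - x s) ^ 2 else 0)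
        = (∑ r ∈ T, ∑ s ∈ T, if r < s then x r ^ 2 else 0)
          + (∑ r ∈ T, ∑ s ∈ T, if r < s then x s ^ 2 else 0) - 2 * P := by
      rw [hP, Finset.mul_sum, ← Finset.sum_add_distrib, ← Finset.sum_sub_distrib]
      refine Finset.sum_congr rfl fun r _ => ?_
      rw [Finset.mul_sum, ← Finset.sum_add_distrib, ← Finset.sum_sub_distrib]
      refine Finset.sum_congr rfl fun s _ => ?_
      split_ifs <;> ring
    have swap : (∑ r ∈ T, ∑ s ∈ T, if r < s then x s ^ 2 else 0)
        = ∑ r ∈ T, ∑ s ∈ T, if s < r then x r ^ 2 else 0 := by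
      rw [Finset.sum_comm]
    have comb : (∑ r ∈ T, ∑ s ∈ T, if r < s then x r ^ 2 else 0)
        + (∑ r ∈ T, ∑ s ∈ T, if s < r then x r ^ 2 else 0) = ((m : ℝ) - 1) * A := by
      rw [← Finset.sum_add_distrib, hA, Finset.mul_sum]
      refine Finset.sum_congr rfl fun r hr => ?_
      rw [← Finset.sum_add_distrib]
      have step : ∀ s ∈ T, ((if r < s then x r ^ 2 else 0) + (if s < r then x r ^ 2 else 0))
          = x r ^ 2 - (if r = s then x r ^ 2 else 0) := by
        intro s hs
        rcases lt_trichotomy r s with h | h | h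
        · simp [h, not_lt.mpr (le_of_lt h), ne_of_lt h]
        · simp [h]
        · simp [h, not_lt.mpr (le_of_lt h), ne_of_gt h]
      rw [Finset.sum_congr rfl step, Finset.sum_sub_distrib,
        Finset.sum_ite_eq T r (fun _ => x r ^ 2), if_pos hr, Finset.sum_const,
        nsmul_eq_mul, hcard]
      ring
    rw [split3, swap, comb]
  -- positivity of the coefficient
  have hcoef : 0 < 2 / ((m : ℝ) * ((m : ℝ) ^ 2 - 1)) := by
    apply div_pos (by norm_num)
    nlinarith
  constructor
  · rw [h1, h2]
    have h0 : (m : ℝ) ≠ 0 := by linarith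
    have hp1 : (m : ℝ) + 1 ≠ 0 := by linarith
    have hm1 : (m : ℝ) - 1 ≠ 0 := by linarith
    have hsq : (m : ℝ) ^ 2 - 1 ≠ 0 := by nlinarith
    field_simp
    ring
  · rintro ⟨r, hr, s, hs, hxs⟩
    refine mul_pos hcoef ?_
    have inner_nonneg : ∀ t ∈ T, (0:ℝ) ≤ ∑ s ∈ T, (if t < s then (x t - x s) ^ 2 else 0) := by
      intro t _
      refine Finset.sum_nonneg fun s _ => ?_
      split <;> positivity
    have hrs : r ≠ s := fun h => hxs (by rw [h])
    -- choose ordered pair (a,b) with a < b, x a ≠ x b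
    obtain ⟨a, b, ha, hb, hab, hxab⟩ :
        ∃ a b, a ∈ T ∧ b ∈ T ∧ a < b ∧ x a ≠ x b := by
      rcases lt_or_gt_of_ne hrs with h | h
      · exact ⟨r, s, hr, hs, h, hxs⟩
      · exact ⟨s, r, hs, hr, h, fun hh => hxs hh.symm⟩
    have key : (0:ℝ) < ∑ s ∈ T, (if a < s then (x a - x s) ^ 2 else 0) := by
      have hle : (if a < b then (x a - x b) ^ 2 else 0)
          ≤ ∑ s ∈ T, (if a < s then (x a - x s) ^ 2 else 0) := by
        refine Finset.single_le_sum (f := fun s => if a < s then (x a - x s) ^ 2 else 0)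
          (fun s _ => by split <;> positivity) hb
      rw [if_pos hab] at hle
      have : (0:ℝ) < (x a - x b) ^ 2 := by
        have : x a - x b ≠ 0 := sub_ne_zero.mpr hxab
        positivity
      linarith
    calc (0:ℝ) < ∑ s ∈ T, (if a < s then (x a - x s) ^ 2 else 0) := key
      _ ≤ _ := Finset.single_le_sum inner_nonneg ha
end

section
/- Let m ≥ 2 be an integer, t : ℤ → ℝ any sequence, and i ∈ ℤ. Define θ_j = (1/m) Σ_{r=1}^{m} t_{j+1−r} and μ_j^{(2)} = (2/(m(m+1))) Σ_{j+1−m ≤ r ≤ s ≤ j} t_r t_s. Then (μ_i^{(2)} − μ_{i−1}^{(2)})(θ_{i+1} − θ_i) − (μ_{i+1}^{(2)} − μ_i^{(2)})(θ_i − θ_{i−1}) = −(2/(m²(m+1))) (t_{i+1} − t_{i+1−m})(t_i − t_{i−m})(t_{i+1} − t_{i−m}). -/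
open Finset

private lemma sum_top_aux (f : ℤ → ℝ) (a b : ℤ) (h : a ≤ b + 1) :
    ∑ x ∈ Icc a (b + 1), f x = (∑ x ∈ Icc a b, f x) + f (b + 1) := by
  have hins : Icc a (b + 1) = insert (b + 1) (Icc a b) := by
    ext x; simp only [mem_Icc, mem_insert]; omega
  rw [hins, Finset.sum_insert (by simp only [mem_Icc]; omega)]
  ring

private lemma sum_bot_aux (f : ℤ → ℝ) (a b : ℤ) (h : a ≤ b) :
    ∑ x ∈ Icc a b, f x = f a + ∑ x ∈ Icc (a + 1) b, f x := by
  have hins : Icc a b = insert a (Icc (a + 1) b) := by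
    ext x; simp only [mem_Icc, mem_insert]; omega
  rw [hins, Finset.sum_insert (by simp only [mem_Icc]; omega)]

private lemma theta_sum_aux (m : ℕ) (t : ℤ → ℝ) (j : ℤ) :
    ∑ r ∈ Finset.Icc 1 m, t (j + 1 - r) = ∑ r ∈ Icc (j + 1 - m) j, t r := by
  refine Finset.sum_nbij' (fun r : ℕ => j + 1 - r) (fun k : ℤ => (j + 1 - k).toNat) ?_ ?_ ?_ ?_ ?_
  · intro a ha; simp only [mem_Icc] at ha; simp only [mem_Icc]; omega
  · intro a ha; simp only [mem_Icc] at ha; simp only [mem_Icc]; omega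
  · intro a ha; simp only [mem_Icc] at ha; omega
  · intro a ha; simp only [mem_Icc] at ha; omega
  · intro a _; rfl

private lemma inner_aux (t : ℤ → ℝ) (a j r : ℤ) (ha : a ≤ r) :
    ∑ s ∈ Icc a j, (if r ≤ s then t r * t s else 0) = ∑ s ∈ Icc r j, t r * t s := by
  rw [← Finset.sum_filter]
  congr 1
  ext s
  simp only [mem_filter, mem_Icc]
  omega

private lemma S_diff (m : ℕ) (hm : 2 ≤ m) (t : ℤ → ℝ) (j : ℤ) :
    (∑ r ∈ Finset.Icc (j + 1 + 1 - m) (j + 1), ∑ s ∈ Finset.Icc (j + 1 + 1 - m) (j + 1),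
        if r ≤ s then t r * t s else 0)
      - (∑ r ∈ Finset.Icc (j + 1 - m) j, ∑ s ∈ Finset.Icc (j + 1 - m) j,
        if r ≤ s then t r * t s else 0)
    = (t (j + 1) - t (j + 1 - m)) * ∑ r ∈ Icc (j + 1 - m) (j + 1), t r := by
  set a : ℤ := j + 1 - m with ha
  have ham : (m : ℤ) ≥ 2 := by exact_mod_cast hm
  have h1 : a ≤ j := by omega
  have h2 : a + 1 ≤ j := by omega
  have e1 : j + 1 + 1 - (m : ℤ) = a + 1 := by omega
  rw [e1]
  -- rewrite inner sums
  have hS1 : ∑ r ∈ Icc (a + 1) (j + 1), ∑ s ∈ Icc (a + 1) (j + 1),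
      (if r ≤ s then t r * t s else 0)
      = ∑ r ∈ Icc (a + 1) (j + 1), ∑ s ∈ Icc r (j + 1), t r * t s :=
    Finset.sum_congr rfl fun r hr => inner_aux t (a + 1) (j + 1) r (mem_Icc.mp hr).1
  have hS0 : ∑ r ∈ Icc a j, ∑ s ∈ Icc a j, (if r ≤ s then t r * t s else 0)
      = ∑ r ∈ Icc a j, ∑ s ∈ Icc r j, t r * t s :=
    Finset.sum_congr rfl fun r hr => inner_aux t a j r (mem_Icc.mp hr).1
  rw [hS1, hS0]
  -- split S1 at top
  rw [sum_top_aux (fun r => ∑ s ∈ Icc r (j + 1), t r * t s) (a + 1) j (by omega)]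
  have hsplit : ∀ r ∈ Icc (a + 1) j,
      ∑ s ∈ Icc r (j + 1), t r * t s = (∑ s ∈ Icc r j, t r * t s) + t r * t (j + 1) := by
    intro r hr
    exact sum_top_aux (fun s => t r * t s) r j (by simp only [mem_Icc] at hr; omega)
  rw [Finset.sum_congr rfl hsplit, Finset.sum_add_distrib]
  -- split S0 at bottom
  rw [sum_bot_aux (fun r => ∑ s ∈ Icc r j, t r * t s) a j h1]
  -- rewrite totals
  rw [sum_bot_aux t a (j + 1) (by omega), sum_top_aux t (a + 1) j (by omega)]
  rw [sum_bot_aux (fun s => t a * t s) a j h1]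
  have hIcc : Icc (j+1) (j+1) = {j+1} := by simp
  rw [hIcc, Finset.sum_singleton]
  rw [← Finset.sum_mul, ← Finset.mul_sum]
  ring

/-- Determinant identity from the proof of Theorem 6:
`Δμ⁽²⁾_{i-1} Δθ_i − Δμ⁽²⁾_i Δθ_{i-1}` factors as a negative multiple of the
product of the three knot spreads. -/
theorem stmt_12 (m : ℕ) (hm : 2 ≤ m) (t : ℤ → ℝ) (i : ℤ)
    (θ : ℤ → ℝ)
    (hθ : ∀ j : ℤ, θ j = (1 / (m : ℝ)) * ∑ r ∈ Finset.Icc 1 m, t (j + 1 - r))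
    (μ2 : ℤ → ℝ)
    (hμ2 : ∀ j : ℤ, μ2 j = (2 / ((m : ℝ) * ((m : ℝ) + 1))) *
      ∑ r ∈ Finset.Icc (j + 1 - m) j, ∑ s ∈ Finset.Icc (j + 1 - m) j,
        if r ≤ s then t r * t s else 0) :
    (μ2 i - μ2 (i - 1)) * (θ (i + 1) - θ i)
      - (μ2 (i + 1) - μ2 i) * (θ i - θ (i - 1))
    = -(2 / ((m : ℝ) ^ 2 * ((m : ℝ) + 1))) *
        ((t (i + 1) - t (i + 1 - m)) * (t i - t (i - m)) * (t (i + 1) - t (i - m))) := by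
  have hm0 : (m : ℝ) ≠ 0 := by positivity
  have hmz : (m : ℤ) ≥ 2 := by exact_mod_cast hm
  have hm1 : (m : ℝ) + 1 ≠ 0 := by positivity
  -- θ differences
  have hθd : ∀ j : ℤ, θ (j + 1) - θ j = (1 / (m : ℝ)) * (t (j + 1) - t (j + 1 - m)) := by
    intro j
    rw [hθ (j + 1), hθ j, theta_sum_aux, theta_sum_aux]
    have e1 : j + 1 + 1 - (m : ℤ) = (j + 1 - m) + 1 := by omega
    rw [e1]
    rw [sum_top_aux t ((j + 1 - m) + 1) j (by omega)]
    rw [sum_bot_aux t (j + 1 - m) j (by omega)]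
    ring
  -- μ2 differences
  have hμd : ∀ j : ℤ, μ2 (j + 1) - μ2 j = (2 / ((m : ℝ) * ((m : ℝ) + 1))) *
      ((t (j + 1) - t (j + 1 - m)) * ∑ r ∈ Icc (j + 1 - m) (j + 1), t r) := by
    intro j
    rw [hμ2 (j + 1), hμ2 j, ← mul_sub, S_diff m hm t j]
  -- specialize
  have hA := hθd (i - 1); have hB := hθd i
  have hC := hμd (i - 1); have hD := hμd i
  simp only [sub_add_cancel] at hA hC
  rw [hB, hA, hD, hC]
  have hU : (∑ x ∈ Icc (i - (m : ℤ)) i, t x)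
      = (∑ r ∈ Icc (i + 1 - (m : ℤ)) (i + 1), t r) + (t (i - m) - t (i + 1)) := by
    rw [sum_bot_aux t (i - m) i (by omega), sum_top_aux t (i + 1 - m) i (by omega),
      show i - (m : ℤ) + 1 = i + 1 - m by ring]
    ring
  rw [hU]
  field_simp
  ring
end

section
/- Let m ≥ 2 and p ≥ m be integers, let t : ℤ → ℝ be strictly increasing, and let i ∈ ℤ. Define θ_j = (1/m) Σ_{r=1}^{m} t_{j+1−r}, θ_i^{(2)} = (2/(m(m−1))) Σ_{i+1−m ≤ r < s ≤ i} t_r t_s, μ_j^{(2)} = (2/(m(m+1))) Σ_{j+1−m ≤ r ≤ s ≤ j} t_r t_s, ξ_i = μ_i^{(2)} − θ_i^{(2)}, and δ_i = (θ_i − θ_{i−p})(μ_{i+p}^{(2)} − μ_i^{(2)}) − (θ_{i+p} − θ_i)(μ_i^{(2)} − μ_{i−p}^{(2)}). Then δ_i > 0, and with a*(−p) = −ξ_i (θ_{i+p} − θ_i)/δ_i, a*(p) = −ξ_i (θ_i − θ_{i−p})/δ_i, a*(0) = 1 − a*(−p) − a*(p), one has |a*(−p)| + |a*(0)| + |a*(p)|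 ≤ 1 + C(m)/4, where C(m) = m²(m+2)/(m−1)² for m even and C(m) = (m+1)²/(m−1) for m odd. -/
lemma qi_reindex (m : ℕ) (j : ℤ) (f : ℤ → ℝ) :
    ∑ r ∈ Finset.Icc 1 m, f (j + 1 - r) = ∑ r ∈ Finset.Icc (j + 1 - m) j, f r := by
  refine Finset.sum_nbij' (i := fun r => j + 1 - (r : ℤ)) (j := fun s => (j + 1 - s).toNat) ?_ ?_ ?_ ?_ ?_
  · intro a ha; simp only [Finset.mem_Icc] at *; omega
  · intro a ha; simp only [Finset.mem_Icc] at *; omega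
  · intro a ha; simp only [Finset.mem_Icc] at *; omega
  · intro a ha; simp only [Finset.mem_Icc] at *; omega
  · intro a ha; rfl

lemma qi_card (m : ℕ) (j : ℤ) : (Finset.Icc (j + 1 - m) j).card = m := by
  rw [Int.card_Icc]; omega

lemma qi_split_lt (W : Finset ℤ) (t : ℤ → ℝ) :
    ∑ r ∈ W, ∑ s ∈ W, (if r < s then t r * t s else 0)
      = ((∑ r ∈ W, t r) ^ 2 - ∑ r ∈ W, (t r) ^ 2) / 2 := by
  have hsq : (∑ r ∈ W, t r) ^ 2 = ∑ r ∈ W, ∑ s ∈ W, t r * t s := by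
    rw [sq, Finset.sum_mul_sum]
  have hdiag : ∑ r ∈ W, ∑ s ∈ W, (if r = s then t r * t s else 0)
      = ∑ r ∈ W, (t r) ^ 2 := by
    apply Finset.sum_congr rfl
    intro r hr
    rw [Finset.sum_ite_eq W r (fun s => t r * t s), if_pos hr, sq]
  have hgt : ∑ r ∈ W, ∑ s ∈ W, (if s < r then t r * t s else 0)
      = ∑ r ∈ W, ∑ s ∈ W, (if r < s then t r * t s else 0) := by
    rw [Finset.sum_comm]
    apply Finset.sum_congr rfl; intro r _; apply Finset.sum_congr rfl; intro s _
    rw [mul_comm]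
  have htri : (∑ r ∈ W, ∑ s ∈ W, t r * t s)
      = ∑ r ∈ W, ∑ s ∈ W, (if r < s then t r * t s else 0)
        + ∑ r ∈ W, ∑ s ∈ W, (if r = s then t r * t s else 0)
        + ∑ r ∈ W, ∑ s ∈ W, (if s < r then t r * t s else 0) := by
    rw [← Finset.sum_add_distrib, ← Finset.sum_add_distrib]
    apply Finset.sum_congr rfl; intro r _
    rw [← Finset.sum_add_distrib, ← Finset.sum_add_distrib]
    apply Finset.sum_congr rfl; intro s _
    rcases lt_trichotomy r s with h | h | h
    · simp [h, h.ne, not_lt.mpr h.le]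
    · simp [h]
    · simp [h, h.ne', not_lt.mpr h.le]
  rw [hsq, htri, hdiag, hgt]; ring

lemma qi_split_le (W : Finset ℤ) (t : ℤ → ℝ) :
    ∑ r ∈ W, ∑ s ∈ W, (if r ≤ s then t r * t s else 0)
      = ((∑ r ∈ W, t r) ^ 2 + ∑ r ∈ W, (t r) ^ 2) / 2 := by
  have hdiag : ∑ r ∈ W, ∑ s ∈ W, (if r = s then t r * t s else 0)
      = ∑ r ∈ W, (t r) ^ 2 := by
    apply Finset.sum_congr rfl
    intro r hr
    rw [Finset.sum_ite_eq W r (fun s => t r * t s), if_pos hr, sq]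
  have hsplit : ∑ r ∈ W, ∑ s ∈ W, (if r ≤ s then t r * t s else 0)
      = ∑ r ∈ W, ∑ s ∈ W, (if r < s then t r * t s else 0)
        + ∑ r ∈ W, ∑ s ∈ W, (if r = s then t r * t s else 0) := by
    rw [← Finset.sum_add_distrib]
    apply Finset.sum_congr rfl; intro r _
    rw [← Finset.sum_add_distrib]
    apply Finset.sum_congr rfl; intro s _
    rcases lt_trichotomy r s with h | h | h
    · simp [h, h.le, h.ne]
    · simp [h]
    · simp [h, h.ne', not_le.mpr h, not_lt.mpr h.le]
  rw [hsplit, qi_split_lt, hdiag]; ring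

lemma qi_bd (mR A Q a b u v : ℝ) (hm : 0 < mR)
    (hQle : Q ≤ (a + b) * A - mR * (a * b))
    (hAu : mR * u = A - mR * a) (hAv : mR * v = mR * b - A) :
    mR * Q - A ^ 2 ≤ mR ^ 2 * u * v := by
  have hprod : mR ^ 2 * u * v = (A - mR * a) * (mR * b - A) := by
    calc mR ^ 2 * u * v = (mR * u) * (mR * v) := by ring
      _ = (A - mR * a) * (mR * b - A) := by rw [hAu, hAv]
  nlinarith [mul_le_mul_of_nonneg_left hQle hm.le, hprod]

lemma qi_kh (mR K h1 h2 u v : ℝ) (hu0 : 0 < u) (hv0 : 0 < v)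
    (huh1 : u < h1) (hvh2 : v < h2) (hBD : K ≤ mR ^ 2 * u * v) :
    K ≤ mR ^ 2 * (h1 * h2) := by
  nlinarith [sq_nonneg mR, mul_pos (sub_pos.2 huh1) hv0,
    mul_pos (lt_trans hu0 huh1) (sub_pos.2 hvh2)]

lemma qi_main (mR K h1 h2 : ℝ) (hm : 2 ≤ mR) (hK0 : 0 ≤ K)
    (hKh : K ≤ mR ^ 2 * (h1 * h2)) :
    mR * K ≤ h1 * h2 * (mR ^ 2 * (mR + 1)) - K := by
  nlinarith [mul_le_mul_of_nonneg_left hKh (by linarith : (0:ℝ) ≤ mR + 1)]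

lemma qi_strictpos (mR K h1 h2 : ℝ) (hm : 2 ≤ mR) (hK0 : 0 ≤ K)
    (hKh : K ≤ mR ^ 2 * (h1 * h2)) (h1p : 0 < h1) (h2p : 0 < h2) :
    0 < h1 * h2 * (mR ^ 2 * (mR + 1)) - K := by
  nlinarith [mul_pos h1p h2p, mul_pos (mul_pos h1p h2p) (by nlinarith : (0:ℝ) < mR ^ 3)]

lemma qi_dP (δ Vp Vm V0 P K h1 h2 : ℝ)
    (hδ : δ = h1 * h2 * (h1 + h2) + h1 * Vp + h2 * Vm - (h1 + h2) * V0)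
    (he0 : V0 * P = K) (hVp : 0 ≤ Vp) (hVm : 0 ≤ Vm)
    (h1p : 0 < h1) (h2p : 0 < h2) (hP : 0 < P) :
    (h1 + h2) * (h1 * h2 * P - K) ≤ δ * P := by
  subst hδ
  nlinarith [mul_nonneg (mul_nonneg h1p.le hVp) hP.le,
    mul_nonneg (mul_nonneg h2p.le hVm) hP.le, he0,
    mul_pos h1p hP, mul_pos h2p hP]

lemma qi_dpos (δ X P h1 h2 : ℝ) (h : (h1 + h2) * X ≤ δ * P)
    (hX : 0 < X) (h1p : 0 < h1) (h2p : 0 < h2) (hP : 0 < P) : 0 < δ := by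
  nlinarith [mul_pos (add_pos h1p h2p) hX]

lemma qi_s5 (mR K δ h1 h2 : ℝ) (hm : 0 < mR)
    (h4 : (h1 + h2) * (mR * K) ≤ δ * (mR ^ 2 * (mR + 1))) :
    K * (h1 + h2) ≤ δ * (mR * (mR + 1)) := by
  nlinarith [h4]

lemma qi_last (C δ mR K h1 h2 : ℝ)
    (h6 : 16 * (K * (h1 + h2)) ≤ C * (mR - 1) * (δ * (mR * (mR + 1)))) :
    4 * K * (h1 + h2) ≤ C / 4 * δ * (mR * (mR - 1) * (mR + 1)) := by
  linarith [h6]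

lemma qi_cge_even (mR : ℝ) (hm : 2 ≤ mR) :
    16 ≤ mR ^ 2 * (mR + 2) / (mR - 1) ^ 2 * (mR - 1) := by
  rw [div_mul_eq_mul_div, le_div_iff₀ (by nlinarith : (0:ℝ) < (mR - 1) ^ 2)]
  nlinarith [mul_nonneg (mul_nonneg (by linarith : (0:ℝ) ≤ mR - 1)
    (by linarith : (0:ℝ) ≤ mR - 2)) (by nlinarith : (0:ℝ) ≤ mR ^ 2 + 4 * mR - 8)]

lemma qi_cge_odd (mR : ℝ) (hm : 3 ≤ mR) :
    16 ≤ (mR + 1) ^ 2 / (mR - 1) * (mR - 1) := by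
  rw [div_mul_eq_mul_div, le_div_iff₀ (by linarith : (0:ℝ) < mR - 1)]
  nlinarith

set_option maxHeartbeats 1000000 in
/-- Theorem 8 of the paper (analytic content): the coefficients of the
integral quasi-interpolant `G_p*` satisfy `δ_i > 0` and
`|a*(-p)| + |a*(0)| + |a*(p)| ≤ 1 + C(m)/4`, uniformly in `p ≥ m` and in the
partition. -/
theorem stmt_13 (m p : ℕ) (hm : 2 ≤ m) (hp : m ≤ p)
    (t : ℤ → ℝ) (ht : StrictMono t) (i : ℤ)
    (θ : ℤ → ℝ)
    (hθ : ∀ j : ℤ, θ j = (1 / (m : ℝ)) * ∑ r ∈ Finset.Icc 1 m, t (j + 1 - r))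
    (θ2 : ℝ)
    (hθ2 : θ2 = (2 / ((m : ℝ) * ((m : ℝ) - 1))) *
      ∑ r ∈ Finset.Icc (i + 1 - m) i, ∑ s ∈ Finset.Icc (i + 1 - m) i,
        if r < s then t r * t s else 0)
    (μ2 : ℤ → ℝ)
    (hμ2 : ∀ j : ℤ, μ2 j = (2 / ((m : ℝ) * ((m : ℝ) + 1))) *
      ∑ r ∈ Finset.Icc (j + 1 - m) j, ∑ s ∈ Finset.Icc (j + 1 - m) j,
        if r ≤ s then t r * t s else 0)
    (ξ δ : ℝ)
    (hξ : ξ = μ2 i - θ2)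
    (hδ : δ = (θ i - θ (i - p)) * (μ2 (i + p) - μ2 i)
      - (θ (i + p) - θ i) * (μ2 i - μ2 (i - p)))
    (am a0 ap : ℝ)
    (ham : am = -ξ * (θ (i + p) - θ i) / δ)
    (hap : ap = -ξ * (θ i - θ (i - p)) / δ)
    (ha0 : a0 = 1 - am - ap)
    (C : ℝ)
    (hC : C = if m % 2 = 0 then (m : ℝ) ^ 2 * ((m : ℝ) + 2) / ((m : ℝ) - 1) ^ 2
      else ((m : ℝ) + 1) ^ 2 / ((m : ℝ) - 1)) :
    0 < δ ∧ |am| + |a0| + |ap| ≤ 1 + C / 4 := by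
  set mR : ℝ := (m : ℝ) with hmR
  have hmR2 : (2 : ℝ) ≤ mR := by rw [hmR]; exact_mod_cast hm
  have hmR0 : (0 : ℝ) < mR := by linarith
  set A : ℤ → ℝ := fun j => ∑ r ∈ Finset.Icc (j + 1 - m) j, t r with hA
  set Q : ℤ → ℝ := fun j => ∑ r ∈ Finset.Icc (j + 1 - m) j, (t r) ^ 2 with hQ
  have hθA : ∀ j, θ j = A j / mR := by
    intro j; rw [hθ j, qi_reindex m j t]; simp only [hA]; ring
  have hμA : ∀ j, μ2 j = ((A j) ^ 2 + Q j) / (mR * (mR + 1)) := by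
    intro j; rw [hμ2 j, qi_split_le]; simp only [hA, hQ]; ring
  have hθ2A : θ2 = ((A i) ^ 2 - Q i) / (mR * (mR - 1)) := by
    rw [hθ2, qi_split_lt]; simp only [hA, hQ]; ring
  have hCS : ∀ j, (A j) ^ 2 ≤ mR * Q j := by
    intro j
    have h := sq_sum_le_card_mul_sum_sq (s := Finset.Icc (j + 1 - (m:ℤ)) j) (f := t)
    rw [qi_card m j] at h
    simpa only [hA, hQ, hmR] using h
  set K : ℝ := mR * Q i - (A i) ^ 2 with hK
  have hK0 : 0 ≤ K := by have := hCS i; rw [hK]; linarith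
  have hmm1 : mR * (mR - 1) ≠ 0 := ne_of_gt (mul_pos hmR0 (by linarith))
  have hmp1 : mR * (mR + 1) ≠ 0 := by positivity
  have hξK : ξ = 2 * K / (mR * (mR - 1) * (mR + 1)) := by
    rw [hξ, hμA, hθ2A, hK]
    field_simp [(by linarith : (0:ℝ) < mR - 1).ne', (by linarith : (0:ℝ) < mR + 1).ne']
    ring
  set a : ℝ := t (i + 1 - m) with ha
  set b : ℝ := t i with hb
  set u : ℝ := θ i - a with hu
  set v : ℝ := b - θ i with hv
  have hta : ∀ r ∈ Finset.Icc (i + 1 - (m:ℤ)) i, a ≤ t r := by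
    intro r hr; rw [Finset.mem_Icc] at hr; exact ht.monotone hr.1
  have htb : ∀ r ∈ Finset.Icc (i + 1 - (m:ℤ)) i, t r ≤ b := by
    intro r hr; rw [Finset.mem_Icc] at hr; exact ht.monotone hr.2
  have hau : mR * a < A i := by
    have h := Finset.sum_lt_sum (f := fun _ : ℤ => a) (g := t)
      (s := Finset.Icc (i + 1 - (m:ℤ)) i) hta
      ⟨i, by rw [Finset.mem_Icc]; omega, ht (by omega : i + 1 - (m:ℤ) < i)⟩
    rw [Finset.sum_const, qi_card, nsmul_eq_mul] at h
    simpa only [hA, hmR] using h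
  have hbv : A i < mR * b := by
    have h := Finset.sum_lt_sum (f := t) (g := fun _ : ℤ => b)
      (s := Finset.Icc (i + 1 - (m:ℤ)) i) htb
      ⟨i + 1 - m, by rw [Finset.mem_Icc]; omega, ht (by omega : i + 1 - (m:ℤ) < i)⟩
    rw [Finset.sum_const, qi_card, nsmul_eq_mul] at h
    simpa only [hA, hmR] using h
  have hu0 : 0 < u := by
    rw [hu, hθA, sub_pos, lt_div_iff₀ hmR0]; linarith
  have hv0 : 0 < v := by
    rw [hv, hθA, sub_pos, div_lt_iff₀ hmR0]; linarith
  have hAu : mR * u = A i - mR * a := by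
    rw [hu, hθA]; field_simp
  have hAv : mR * v = mR * b - A i := by
    rw [hv, hθA]; field_simp
  have hBD : K ≤ mR ^ 2 * u * v := by
    have hnn : (0:ℝ) ≤ ∑ r ∈ Finset.Icc (i + 1 - (m:ℤ)) i, (t r - a) * (b - t r) :=
      Finset.sum_nonneg fun r hr =>
        mul_nonneg (by linarith [hta r hr]) (by linarith [htb r hr])
    have hexp : ∑ r ∈ Finset.Icc (i + 1 - (m:ℤ)) i, (t r - a) * (b - t r)
        = (a + b) * A i - Q i - mR * (a * b) := by
      rw [Finset.sum_congr rfl (fun r _ => by ring :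
        ∀ r ∈ Finset.Icc (i + 1 - (m:ℤ)) i,
          (t r - a) * (b - t r) = (a + b) * t r - (t r) ^ 2 - a * b)]
      rw [Finset.sum_sub_distrib, Finset.sum_sub_distrib, ← Finset.mul_sum,
        Finset.sum_const, qi_card, nsmul_eq_mul]
    have hQle : Q i ≤ (a + b) * A i - mR * (a * b) := by
      rw [hexp] at hnn; linarith
    rw [hK]
    exact qi_bd mR (A i) (Q i) a b u v hmR0 hQle hAu hAv
  set h1 : ℝ := θ i - θ (i - p) with hh1
  set h2 : ℝ := θ (i + p) - θ i with hh2
  have hθmlta : θ (i - p) < a := by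
    have hne : (Finset.Icc ((i - (p:ℤ)) + 1 - (m:ℤ)) (i - p)).Nonempty := by
      rw [← Finset.card_pos, qi_card]; omega
    have hlt : ∀ r ∈ Finset.Icc ((i - (p:ℤ)) + 1 - (m:ℤ)) (i - p), t r < a := by
      intro r hr; rw [Finset.mem_Icc] at hr; exact ht (by omega)
    have h := Finset.sum_lt_sum_of_nonempty hne hlt
    rw [Finset.sum_const, qi_card, nsmul_eq_mul] at h
    have h' : A (i - p) < mR * a := by simpa only [hA, hmR] using h
    rw [hθA, div_lt_iff₀ hmR0]; linarith
  have hθpgtb : b < θ (i + p) := by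
    have hne : (Finset.Icc ((i + (p:ℤ)) + 1 - (m:ℤ)) (i + p)).Nonempty := by
      rw [← Finset.card_pos, qi_card]; omega
    have hlt : ∀ r ∈ Finset.Icc ((i + (p:ℤ)) + 1 - (m:ℤ)) (i + p), b < t r := by
      intro r hr; rw [Finset.mem_Icc] at hr; exact ht (by omega)
    have h := Finset.sum_lt_sum_of_nonempty hne hlt
    rw [Finset.sum_const, qi_card, nsmul_eq_mul] at h
    have h' : mR * b < A (i + p) := by simpa only [hA, hmR] using h
    rw [hθA, lt_div_iff₀ hmR0]; linarith
  have huh1 : u < h1 := by rw [hu, hh1]; linarith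
  have hvh2 : v < h2 := by rw [hv, hh2]; linarith
  have hh1p : 0 < h1 := lt_trans hu0 huh1
  have hh2p : 0 < h2 := lt_trans hv0 hvh2
  have hV : ∀ j, μ2 j - (θ j) ^ 2 = (mR * Q j - (A j) ^ 2) / (mR ^ 2 * (mR + 1)) := by
    intro j
    rw [hμA, hθA]
    field_simp
    ring
  have hVp : 0 ≤ μ2 (i + p) - (θ (i + p)) ^ 2 := by
    rw [hV]
    apply div_nonneg
    · linarith [hCS (i + p)]
    · positivity
  have hVm : 0 ≤ μ2 (i - p) - (θ (i - p)) ^ 2 := by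
    rw [hV]
    apply div_nonneg
    · linarith [hCS (i - p)]
    · positivity
  have hV0 : μ2 i - (θ i) ^ 2 = K / (mR ^ 2 * (mR + 1)) := by rw [hV, hK]
  have hδ' : δ = h1 * h2 * (h1 + h2)
      + h1 * (μ2 (i + p) - (θ (i + p)) ^ 2)
      + h2 * (μ2 (i - p) - (θ (i - p)) ^ 2)
      - (h1 + h2) * (μ2 i - (θ i) ^ 2) := by
    rw [hδ, hh1, hh2]; ring
  have hP0 : (0:ℝ) < mR ^ 2 * (mR + 1) := by positivity
  have e0 : (μ2 i - (θ i) ^ 2) * (mR ^ 2 * (mR + 1)) = K := by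
    rw [hV0]; field_simp
  have hKh : K ≤ mR ^ 2 * (h1 * h2) := qi_kh mR K h1 h2 u v hu0 hv0 huh1 hvh2 hBD
  have hmain : mR * K ≤ h1 * h2 * (mR ^ 2 * (mR + 1)) - K :=
    qi_main mR K h1 h2 hmR2 hK0 hKh
  have hδP : (h1 + h2) * (h1 * h2 * (mR ^ 2 * (mR + 1)) - K) ≤ δ * (mR ^ 2 * (mR + 1)) :=
    qi_dP δ (μ2 (i + p) - (θ (i + p)) ^ 2) (μ2 (i - p) - (θ (i - p)) ^ 2)
      (μ2 i - (θ i) ^ 2) (mR ^ 2 * (mR + 1)) K h1 h2 hδ' e0 hVp hVm hh1p hh2p hP0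
  have hpos : 0 < h1 * h2 * (mR ^ 2 * (mR + 1)) - K :=
    qi_strictpos mR K h1 h2 hmR2 hK0 hKh hh1p hh2p
  have hδpos : 0 < δ :=
    qi_dpos δ (h1 * h2 * (mR ^ 2 * (mR + 1)) - K) (mR ^ 2 * (mR + 1)) h1 h2 hδP hpos hh1p hh2p hP0
  refine ⟨hδpos, ?_⟩
  have hCge : 16 ≤ C * (mR - 1) := by
    rcases Nat.even_or_odd m with he | ho
    · have hm0 : m % 2 = 0 := Nat.even_iff.mp he
      rw [hC, if_pos hm0]
      exact qi_cge_even mR hmR2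
    · have hm1 : ¬ (m % 2 = 0) := by have := Nat.odd_iff.mp ho; omega
      have hm3 : 3 ≤ m := by have := Nat.odd_iff.mp ho; omega
      have hm3R : (3:ℝ) ≤ mR := by rw [hmR]; exact_mod_cast hm3
      rw [hC, if_neg hm1]
      exact qi_cge_odd mR hm3R
  have hC0 : 0 < C := by
    by_contra hc
    push_neg at hc
    have : C * (mR - 1) ≤ 0 := mul_nonpos_iff.mpr (Or.inr ⟨hc, by linarith⟩)
    linarith
  have hξ0 : 0 ≤ ξ := by
    rw [hξK]
    apply div_nonneg
    · linarith
    · exact le_of_lt (mul_pos (mul_pos hmR0 (by linarith)) (by linarith))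
  have ham0 : am ≤ 0 := by
    rw [ham]
    apply div_nonpos_of_nonpos_of_nonneg
    · have := mul_nonneg hξ0 hh2p.le; linarith
    · linarith
  have hap0 : ap ≤ 0 := by
    rw [hap]
    apply div_nonpos_of_nonpos_of_nonneg
    · have := mul_nonneg hξ0 hh1p.le; linarith
    · linarith
  have ha0pos : 0 < a0 := by rw [ha0]; linarith
  have habs : |am| + |a0| + |ap| = 1 + 2 * ξ * (h1 + h2) / δ := by
    rw [abs_of_nonpos ham0, abs_of_pos ha0pos, abs_of_nonpos hap0, ha0, ham, hap]
    field_simp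
    ring
  rw [habs]
  have hS5 : K * (h1 + h2) ≤ δ * (mR * (mR + 1)) := by
    have h4 : (h1 + h2) * (mR * K) ≤ δ * (mR ^ 2 * (mR + 1)) :=
      le_trans (mul_le_mul_of_nonneg_left hmain (by linarith)) hδP
    exact qi_s5 mR K δ h1 h2 hmR0 h4
  have hfinal : 2 * ξ * (h1 + h2) ≤ C / 4 * δ := by
    have hD : (0:ℝ) < mR * (mR - 1) * (mR + 1) :=
      mul_pos (mul_pos hmR0 (by linarith)) (by linarith)
    rw [hξK, show 2 * (2 * K / (mR * (mR - 1) * (mR + 1))) * (h1 + h2)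
      = 4 * K * (h1 + h2) / (mR * (mR - 1) * (mR + 1)) from by ring,
      div_le_iff₀ hD]
    have h6 : 16 * (K * (h1 + h2)) ≤ (C * (mR - 1)) * (δ * (mR * (mR + 1))) :=
      mul_le_mul hCge hS5 (mul_nonneg hK0 (by linarith)) (by linarith)
    exact qi_last C δ mR K h1 h2 h6
  have hdiv : 2 * ξ * (h1 + h2) / δ ≤ C / 4 := by
    rw [div_le_iff₀ hδpos]; linarith
  linarith
end

section
/- Let m ≥ 2 and p ≥ m be integers, let t : ℤ → ℝ be strictly increasing, and let i ∈ ℤ. Define θ_j = (1/m) Σ_{r=1}^{m} t_{j+1−r}, θ_i^{(2)} = (2/(m(m−1))) Σ_{i+1−m ≤ r < s ≤ i} t_r t_s, μ_j^{(2)} = (2/(m(m+1))) Σ_{j+1−m ≤ r ≤ s ≤ j} t_r t_s. Assume that for all integers 1 ≤ r ≤ p−1: (μ_i^{(2)} − μ_{i−r}^{(2)})/(θ_i − θ_{i−r}) ≤ (μ_{i+p}^{(2)} − μ_{i−p}^{(2)})/(θ_{i+p} − θ_{i−p}) and (μ_{i−r}^{(2)} − μ_{i−p}^{(2)})/(θ_{i−r}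 − θ_{i−p}) ≤ (μ_{i+p}^{(2)} − μ_{i−r}^{(2)})/(θ_{i+p} − θ_{i−r}); and that for all integers 1 ≤ s ≤ p−1: (μ_{i+p}^{(2)} − μ_{i−p}^{(2)})/(θ_{i+p} − θ_{i−p}) ≤ (μ_{i+s}^{(2)} − μ_i^{(2)})/(θ_{i+s} − θ_i) and (μ_{i+s}^{(2)} − μ_{i−p}^{(2)})/(θ_{i+s} − θ_{i−p}) ≤ (μ_{i+p}^{(2)} − μ_{i+s}^{(2)})/(θ_{i+p} − θ_{i+s}). Let δ_i = (θ_i − θ_{i−p})(μ_{i+p}^{(2)} − μ_i^{(2)}) − (θ_{i+p} − θ_i)(μ_i^{(2)} − μ_{i−p}^{(2)}), ξ_i = μ_i^{(2)} − θ_i^{(2)}, and let a* : {−p,…,p} → ℝ be given by a*(−p) = −ξ_i (θ_{i+p} − θ_i)/δ_i, a*(p) = −ξ_i (θ_i − θ_{i−p})/δ_i, a*(0) = 1 − a*(−p) − a*(p), and a*(s) = 0 otherwise. Then for every a : {−p,…,p} → ℝ satisfying Σ_{s=−p}^{p} a(s) = 1, Σ_{s=−p}^{p} a(s) θ_{i+s}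 = θ_i, and Σ_{s=−p}^{p} a(s) μ_{i+s}^{(2)} = θ_i^{(2)}, one has Σ_{s=−p}^{p} |a*(s)| ≤ Σ_{s=−p}^{p} |a(s)|. -/
private lemma slope_mid {x1 x2 x3 y1 y2 y3 : ℝ} (h12 : x1 < x2) (h23 : x2 < x3)
    (h : (y2 - y1) / (x2 - x1) ≤ (y3 - y2) / (x3 - x2)) :
    (y2 - y1) / (x2 - x1) ≤ (y3 - y1) / (x3 - x1) ∧
      (y3 - y1) / (x3 - x1) ≤ (y3 - y2) / (x3 - x2) := by
  have d1 : (0:ℝ) < x2 - x1 := by linarith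
  have d2 : (0:ℝ) < x3 - x2 := by linarith
  have d3 : (0:ℝ) < x3 - x1 := by linarith
  rw [div_le_div_iff₀ d1 d2] at h
  constructor
  · rw [div_le_div_iff₀ d1 d3]; nlinarith
  · rw [div_le_div_iff₀ d3 d2]; nlinarith

private lemma slope_max {x1 x2 x3 y1 y2 y3 M : ℝ} (h12 : x1 < x2) (h23 : x2 < x3)
    (hA : (y2 - y1) / (x2 - x1) ≤ M) (hB : (y3 - y2) / (x3 - x2) ≤ M) :
    (y3 - y1) / (x3 - x1) ≤ M := by
  rw [div_le_iff₀ (by linarith : (0:ℝ) < x2 - x1)] at hA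
  rw [div_le_iff₀ (by linarith : (0:ℝ) < x3 - x2)] at hB
  rw [div_le_iff₀ (by linarith : (0:ℝ) < x3 - x1)]
  nlinarith

private lemma slope_min {x1 x2 x3 y1 y2 y3 M : ℝ} (h12 : x1 < x2) (h23 : x2 < x3)
    (hA : M ≤ (y2 - y1) / (x2 - x1)) (hB : M ≤ (y3 - y2) / (x3 - x2)) :
    M ≤ (y3 - y1) / (x3 - x1) := by
  rw [le_div_iff₀ (by linarith : (0:ℝ) < x2 - x1)] at hA
  rw [le_div_iff₀ (by linarith : (0:ℝ) < x3 - x2)] at hB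
  rw [le_div_iff₀ (by linarith : (0:ℝ) < x3 - x1)]
  nlinarith

set_option maxHeartbeats 1000000 in
/-- Theorem 9 of the paper: under the stated ratio conditions on the B-spline
moments, the coefficient vector `a*` of the integral quasi-interpolant `G_p*`
is an optimal solution of the local ℓ¹-minimization problem with the moment
constraints expressing exactness on ℙ₂. -/
theorem stmt_14 (m p : ℕ) (hm : 2 ≤ m) (hp : m ≤ p)
    (t : ℤ → ℝ) (ht : StrictMono t) (i : ℤ)
    (θ : ℤ → ℝ)
    (hθ : ∀ j : ℤ, θ j = (1 / (m : ℝ)) * ∑ r ∈ Finset.Icc 1 m, t (j + 1 - r))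
    (θ2 : ℝ)
    (hθ2 : θ2 = (2 / ((m : ℝ) * ((m : ℝ) - 1))) *
      ∑ r ∈ Finset.Icc (i + 1 - m) i, ∑ s ∈ Finset.Icc (i + 1 - m) i,
        if r < s then t r * t s else 0)
    (μ2 : ℤ → ℝ)
    (hμ2 : ∀ j : ℤ, μ2 j = (2 / ((m : ℝ) * ((m : ℝ) + 1))) *
      ∑ r ∈ Finset.Icc (j + 1 - m) j, ∑ s ∈ Finset.Icc (j + 1 - m) j,
        if r ≤ s then t r * t s else 0)
    (hr1 : ∀ r : ℕ, 1 ≤ r → r ≤ p - 1 →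
      (μ2 i - μ2 (i - r)) / (θ i - θ (i - r)) ≤
        (μ2 (i + p) - μ2 (i - p)) / (θ (i + p) - θ (i - p)))
    (hr2 : ∀ r : ℕ, 1 ≤ r → r ≤ p - 1 →
      (μ2 (i - r) - μ2 (i - p)) / (θ (i - r) - θ (i - p)) ≤
        (μ2 (i + p) - μ2 (i - r)) / (θ (i + p) - θ (i - r)))
    (hs1 : ∀ s : ℕ, 1 ≤ s → s ≤ p - 1 →
      (μ2 (i + p) - μ2 (i - p)) / (θ (i + p) - θ (i - p)) ≤
        (μ2 (i + s) - μ2 i) / (θ (i + s) - θ i))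
    (hs2 : ∀ s : ℕ, 1 ≤ s → s ≤ p - 1 →
      (μ2 (i + s) - μ2 (i - p)) / (θ (i + s) - θ (i - p)) ≤
        (μ2 (i + p) - μ2 (i + s)) / (θ (i + p) - θ (i + s)))
    (ξ δ : ℝ)
    (hξ : ξ = μ2 i - θ2)
    (hδ : δ = (θ i - θ (i - p)) * (μ2 (i + p) - μ2 i)
      - (θ (i + p) - θ i) * (μ2 i - μ2 (i - p)))
    (astar : ℤ → ℝ)
    (h1 : astar (-p) = -ξ * (θ (i + p) - θ i) / δ)
    (h3 : astar p = -ξ * (θ i - θ (i - p)) / δ)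
    (h2 : astar 0 = 1 - astar (-p) - astar p)
    (h4 : ∀ s : ℤ, s ≠ -(p : ℤ) → s ≠ 0 → s ≠ (p : ℤ) → astar s = 0)
    (a : ℤ → ℝ)
    (hc0 : ∑ s ∈ Finset.Icc (-(p : ℤ)) p, a s = 1)
    (hc1 : ∑ s ∈ Finset.Icc (-(p : ℤ)) p, a s * θ (i + s) = θ i)
    (hc2 : ∑ s ∈ Finset.Icc (-(p : ℤ)) p, a s * μ2 (i + s) = θ2) :
    ∑ s ∈ Finset.Icc (-(p : ℤ)) p, |astar s| ≤
      ∑ s ∈ Finset.Icc (-(p : ℤ)) p, |a s| := by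
  have hp2 : 2 ≤ p := le_trans hm hp
  have hp1 : 1 ≤ p - 1 := by omega
  have hmR : (1:ℝ) < (m:ℝ) := by exact_mod_cast hm.trans_lt' one_lt_two |>.trans_le le_rfl
  -- θ is strictly monotone
  have hθm : StrictMono θ := by
    apply strictMono_int_of_lt_succ
    intro j
    rw [hθ j, hθ (j+1)]
    have hm0 : (0:ℝ) < 1 / (m:ℝ) := by positivity
    apply mul_lt_mul_of_pos_left _ hm0
    apply Finset.sum_lt_sum_of_nonempty
    · exact Finset.nonempty_Icc.2 (by omega)
    · intro r _
      exact ht (by omega)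
  -- ξ ≥ 0
  have hξ0 : 0 ≤ ξ := by
    have hcard : (Finset.Icc (i + 1 - (m:ℤ)) i).card = m := by
      rw [Int.card_Icc]; omega
    have hsplit : (∑ r ∈ Finset.Icc (i + 1 - (m:ℤ)) i, t r)^2
        = 2 * (∑ r ∈ Finset.Icc (i + 1 - (m:ℤ)) i, ∑ s ∈ Finset.Icc (i + 1 - (m:ℤ)) i,
            if r < s then t r * t s else 0)
          + ∑ r ∈ Finset.Icc (i + 1 - (m:ℤ)) i, (t r)^2 := by
      have hP : (∑ r ∈ Finset.Icc (i + 1 - (m:ℤ)) i, ∑ s ∈ Finset.Icc (i + 1 - (m:ℤ)) i,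
            if r < s then t r * t s else 0)
          = ∑ r ∈ Finset.Icc (i + 1 - (m:ℤ)) i, ∑ s ∈ Finset.Icc (i + 1 - (m:ℤ)) i,
            if s < r then t r * t s else 0 := by
        rw [Finset.sum_comm]
        refine Finset.sum_congr rfl fun r _ => Finset.sum_congr rfl fun s _ => ?_
        by_cases h : s < r
        · rw [if_pos h, if_pos h, mul_comm]
        · rw [if_neg h, if_neg h]
      have hD : (∑ r ∈ Finset.Icc (i + 1 - (m:ℤ)) i, ∑ s ∈ Finset.Icc (i + 1 - (m:ℤ)) i,
            if r = s then t r * t s else 0)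
          = ∑ r ∈ Finset.Icc (i + 1 - (m:ℤ)) i, (t r)^2 := by
        refine Finset.sum_congr rfl fun r hr => ?_
        rw [Finset.sum_ite_eq (Finset.Icc (i + 1 - (m:ℤ)) i) r (fun s => t r * t s),
          if_pos hr, sq]
      calc (∑ r ∈ Finset.Icc (i + 1 - (m:ℤ)) i, t r)^2
          = ∑ r ∈ Finset.Icc (i + 1 - (m:ℤ)) i, ∑ s ∈ Finset.Icc (i + 1 - (m:ℤ)) i,
              t r * t s := by rw [sq, Finset.sum_mul_sum]
        _ = ∑ r ∈ Finset.Icc (i + 1 - (m:ℤ)) i, ∑ s ∈ Finset.Icc (i + 1 - (m:ℤ)) i,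
              ((if r < s then t r * t s else 0) + (if s < r then t r * t s else 0)
                + (if r = s then t r * t s else 0)) := by
            refine Finset.sum_congr rfl fun r _ => Finset.sum_congr rfl fun s _ => ?_
            rcases lt_trichotomy r s with h|h|h
            · rw [if_pos h, if_neg (lt_asymm h), if_neg (ne_of_lt h)]; ring
            · rw [if_neg (by omega : ¬ r < s), if_neg (by omega : ¬ s < r), if_pos h]; ring
            · rw [if_neg (lt_asymm h), if_pos h, if_neg (ne_of_gt h)]; ring
        _ = _ := by
            simp only [Finset.sum_add_distrib]
            rw [← hP, hD]; ring
    have hQ : (∑ r ∈ Finset.Icc (i + 1 - (m:ℤ)) i, ∑ s ∈ Finset.Icc (i + 1 - (m:ℤ)) i,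
          if r ≤ s then t r * t s else 0)
        = (∑ r ∈ Finset.Icc (i + 1 - (m:ℤ)) i, ∑ s ∈ Finset.Icc (i + 1 - (m:ℤ)) i,
            if r < s then t r * t s else 0)
          + ∑ r ∈ Finset.Icc (i + 1 - (m:ℤ)) i, (t r)^2 := by
      have hD : (∑ r ∈ Finset.Icc (i + 1 - (m:ℤ)) i, ∑ s ∈ Finset.Icc (i + 1 - (m:ℤ)) i,
            if r = s then t r * t s else 0)
          = ∑ r ∈ Finset.Icc (i + 1 - (m:ℤ)) i, (t r)^2 := by
        refine Finset.sum_congr rfl fun r hr => ?_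
        rw [Finset.sum_ite_eq (Finset.Icc (i + 1 - (m:ℤ)) i) r (fun s => t r * t s),
          if_pos hr, sq]
      rw [← hD, ← Finset.sum_add_distrib]
      refine Finset.sum_congr rfl fun r _ => ?_
      rw [← Finset.sum_add_distrib]
      refine Finset.sum_congr rfl fun s _ => ?_
      rcases lt_trichotomy r s with h|h|h
      · rw [if_pos h.le, if_pos h, if_neg (ne_of_lt h)]; ring
      · rw [if_pos h.le, if_neg (by omega : ¬ r < s), if_pos h]; ring
      · rw [if_neg (by omega : ¬ r ≤ s), if_neg (lt_asymm h), if_neg (ne_of_gt h)]; ring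
    have hCS : (∑ r ∈ Finset.Icc (i + 1 - (m:ℤ)) i, t r)^2
        ≤ (m:ℝ) * ∑ r ∈ Finset.Icc (i + 1 - (m:ℤ)) i, (t r)^2 := by
      have := sq_sum_le_card_mul_sum_sq (s := Finset.Icc (i + 1 - (m:ℤ)) i) (f := t)
      rwa [hcard] at this
    have key : 2 * (∑ r ∈ Finset.Icc (i + 1 - (m:ℤ)) i, ∑ s ∈ Finset.Icc (i + 1 - (m:ℤ)) i,
          if r < s then t r * t s else 0)
        ≤ ((m:ℝ) - 1) * ∑ r ∈ Finset.Icc (i + 1 - (m:ℤ)) i, (t r)^2 := by nlinarith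
    rw [hξ, hμ2 i, hθ2, hQ]
    have e1 : (0:ℝ) < (m:ℝ) * ((m:ℝ) + 1) := by nlinarith
    have e2 : (0:ℝ) < (m:ℝ) * ((m:ℝ) - 1) := by nlinarith
    rw [div_mul_eq_mul_div, div_mul_eq_mul_div, sub_nonneg, div_le_div_iff₀ e2 e1]
    nlinarith [key, mul_le_mul_of_nonneg_left key (le_of_lt (by positivity : (0:ℝ) < (m:ℝ)))]
  -- δ ≥ 0
  have t04 : θ (i - p) < θ (i + p) := hθm (by omega)
  have t02 : θ (i - p) < θ i := hθm (by omega)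
  have t24 : θ i < θ (i + p) := hθm (by omega)
  have hδge : 0 ≤ δ := by
    have t01 : θ (i - 1) < θ i := hθm (by omega)
    have t00 : θ (i - p) < θ (i - 1) := hθm (by omega)
    have t23 : θ i < θ (i + 1) := hθm (by omega)
    have t34 : θ (i + 1) < θ (i + p) := hθm (by omega)
    have A1 := hr1 1 le_rfl hp1
    have A2 := hr2 1 le_rfl hp1
    have B1 := hs1 1 le_rfl hp1
    have B2 := hs2 1 le_rfl hp1
    simp only [Nat.cast_one] at A1 A2 B1 B2
    have hLa := (slope_mid t00 (hθm (show (i-1:ℤ) < i + p by omega)) A2).1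
    have hL : (μ2 i - μ2 (i - p)) / (θ i - θ (i - p)) ≤
        (μ2 (i + p) - μ2 (i - p)) / (θ (i + p) - θ (i - p)) :=
      slope_max t00 t01 hLa A1
    have hRb := (slope_mid (hθm (show (i-p:ℤ) < i + 1 by omega)) t34 B2).2
    have hR : (μ2 (i + p) - μ2 (i - p)) / (θ (i + p) - θ (i - p)) ≤
        (μ2 (i + p) - μ2 i) / (θ (i + p) - θ i) :=
      slope_min t23 t34 B1 hRb
    have h := hL.trans hR
    rw [div_le_div_iff₀ (by linarith) (by linarith)] at h
    rw [hδ]; nlinarith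
  rcases hδge.eq_or_lt with heq | hpos
  · -- δ = 0 case
    have hz1 : astar (-p) = 0 := by rw [h1, ← heq, div_zero]
    have hz3 : astar (p:ℤ) = 0 := by rw [h3, ← heq, div_zero]
    have hz2 : astar 0 = 1 := by rw [h2, hz1, hz3]; ring
    have hL : ∑ s ∈ Finset.Icc (-(p : ℤ)) p, |astar s| = 1 := by
      have hcongr : ∀ s ∈ Finset.Icc (-(p : ℤ)) p, |astar s| = if s = 0 then 1 else 0 := by
        intro s _
        by_cases h0 : s = 0
        · simp [h0, hz2]
        · by_cases ha : s = -(p:ℤ)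
          · rw [ha, hz1, abs_zero, if_neg (by omega : ¬ (-(p:ℤ) = 0))]
          · by_cases hb : s = (p:ℤ)
            · rw [hb, hz3, abs_zero, if_neg (by omega : ¬ ((p:ℤ) = 0))]
            · rw [h4 s ha h0 hb, abs_zero, if_neg h0]
      rw [Finset.sum_congr rfl hcongr, Finset.sum_ite_eq' (Finset.Icc _ _) 0 (fun _ => (1:ℝ))]
      have : (0:ℤ) ∈ Finset.Icc (-(p : ℤ)) (p:ℤ) := by
        rw [Finset.mem_Icc]; omega
      simp [this]
    rw [hL]
    calc (1:ℝ) = |∑ s ∈ Finset.Icc (-(p : ℤ)) p, a s| := by rw [hc0]; simp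
    _ ≤ ∑ s ∈ Finset.Icc (-(p : ℤ)) p, |a s| := Finset.abs_sum_le_sum_abs _ _
  · -- δ > 0 case
    have hδne : δ ≠ 0 := ne_of_gt hpos
    have hnp : (θ (i + (p:ℤ)) - θ (i - (p:ℤ))) * (μ2 (i + (p:ℤ)) - μ2 i) - (μ2 (i + (p:ℤ)) - μ2 (i - (p:ℤ))) * (θ (i + (p:ℤ)) - θ i) = δ := by
      rw [hδ]; ring
    have hnn : (θ (i + (p:ℤ)) - θ (i - (p:ℤ))) * (μ2 (i - (p:ℤ)) - μ2 i) - (μ2 (i + (p:ℤ)) - μ2 (i - (p:ℤ))) * (θ (i - (p:ℤ)) - θ i) = δ := by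
      rw [hδ]; ring
    have key : ∀ s ∈ Finset.Icc (-(p : ℤ)) (p:ℤ),
        0 ≤ ((θ (i + (p:ℤ)) - θ (i - (p:ℤ))) * (μ2 (i + s) - μ2 i) - (μ2 (i + (p:ℤ)) - μ2 (i - (p:ℤ))) * (θ (i + s) - θ i)) ∧ ((θ (i + (p:ℤ)) - θ (i - (p:ℤ))) * (μ2 (i + s) - μ2 i) - (μ2 (i + (p:ℤ)) - μ2 (i - (p:ℤ))) * (θ (i + s) - θ i)) ≤ δ := by
      intro s hs
      rw [Finset.mem_Icc] at hs
      rcases eq_or_lt_of_le hs.1 with hsl | hsl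
      · rw [← hsl, show i + -(p:ℤ) = i - (p:ℤ) from by ring, hnn]
        exact ⟨hpos.le, le_refl δ⟩
      rcases eq_or_lt_of_le hs.2 with hsr | hsr
      · rw [hsr, hnp]
        exact ⟨hpos.le, le_refl δ⟩
      rcases lt_trichotomy s 0 with hneg | h0 | hposs
      · obtain ⟨r, hr⟩ : ∃ r : ℕ, (r:ℤ) = -s := ⟨(-s).toNat, by omega⟩
        have hr1' := hr1 r (by omega) (by omega)
        have hr2' := hr2 r (by omega) (by omega)
        have hi : i - (r:ℤ) = i + s := by omega
        rw [hi] at hr1' hr2'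
        have o1 : θ (i - (p:ℤ)) < θ (i + s) := hθm (by omega)
        have o2 : θ (i + s) < θ i := hθm (by omega)
        constructor
        · rw [div_le_div_iff₀ (by linarith) (by linarith)] at hr1'
          linarith
        · have hmM := (slope_mid o1 (by linarith : θ (i + s) < θ (i + (p:ℤ))) hr2').2
          rw [div_le_div_iff₀ (by linarith) (by linarith)] at hmM
          have hid : δ - ((θ (i + (p:ℤ)) - θ (i - (p:ℤ))) * (μ2 (i + s) - μ2 i) - (μ2 (i + (p:ℤ)) - μ2 (i - (p:ℤ))) * (θ (i + s) - θ i))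
              = (θ (i + (p:ℤ)) - θ (i - (p:ℤ))) * (μ2 (i + (p:ℤ)) - μ2 (i + s)) - (μ2 (i + (p:ℤ)) - μ2 (i - (p:ℤ))) * (θ (i + (p:ℤ)) - θ (i + s)) := by
            rw [← hnp]; ring
          linarith
      · rw [h0, show i + (0:ℤ) = i from by ring]
        norm_num
        exact hpos.le
      · obtain ⟨n, hn⟩ : ∃ n : ℕ, (n:ℤ) = s := ⟨s.toNat, by omega⟩
        have hs1' := hs1 n (by omega) (by omega)
        have hs2' := hs2 n (by omega) (by omega)
        rw [hn] at hs1' hs2'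
        have o1 : θ i < θ (i + s) := hθm (by omega)
        have o2 : θ (i + s) < θ (i + (p:ℤ)) := hθm (by omega)
        constructor
        · rw [div_le_div_iff₀ (by linarith) (by linarith)] at hs1'
          linarith
        · have hmM := (slope_mid (by linarith : θ (i - (p:ℤ)) < θ (i + s)) o2 hs2').2
          rw [div_le_div_iff₀ (by linarith) (by linarith)] at hmM
          have hid : δ - ((θ (i + (p:ℤ)) - θ (i - (p:ℤ))) * (μ2 (i + s) - μ2 i) - (μ2 (i + (p:ℤ)) - μ2 (i - (p:ℤ))) * (θ (i + s) - θ i))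
              = (θ (i + (p:ℤ)) - θ (i - (p:ℤ))) * (μ2 (i + (p:ℤ)) - μ2 (i + s)) - (μ2 (i + (p:ℤ)) - μ2 (i - (p:ℤ))) * (θ (i + (p:ℤ)) - θ (i + s)) := by
            rw [← hnp]; ring
          linarith
    -- signs of astar
    have ha_np : astar (-(p:ℤ)) ≤ 0 := by
      rw [h1]
      apply div_nonpos_of_nonpos_of_nonneg _ hpos.le
      nlinarith [mul_nonneg hξ0 (by linarith : (0:ℝ) ≤ θ (i + (p:ℤ)) - θ i)]
    have ha_p : astar (p:ℤ) ≤ 0 := by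
      rw [h3]
      apply div_nonpos_of_nonpos_of_nonneg _ hpos.le
      nlinarith [mul_nonneg hξ0 (by linarith : (0:ℝ) ≤ θ i - θ (i - (p:ℤ)))]
    have ha_0 : 0 ≤ astar 0 := by rw [h2]; linarith
    -- three-point sum helper
    have hsum3 : ∀ F : ℤ → ℝ, ∑ s ∈ Finset.Icc (-(p : ℤ)) (p:ℤ), astar s * F s
        = astar (-(p:ℤ)) * F (-(p:ℤ)) + astar 0 * F 0 + astar (p:ℤ) * F (p:ℤ) := by
      intro F
      have hsub : ({-(p:ℤ), 0, (p:ℤ)} : Finset ℤ) ⊆ Finset.Icc (-(p : ℤ)) (p:ℤ) := by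
        intro x hx
        simp only [Finset.mem_insert, Finset.mem_singleton] at hx
        rw [Finset.mem_Icc]
        rcases hx with h|h|h <;> omega
      have hz : ∀ x ∈ Finset.Icc (-(p : ℤ)) (p:ℤ),
          x ∉ ({-(p:ℤ), 0, (p:ℤ)} : Finset ℤ) → astar x * F x = 0 := by
        intro x _ hnx
        simp only [Finset.mem_insert, Finset.mem_singleton] at hnx
        push_neg at hnx
        rw [h4 x hnx.1 hnx.2.1 hnx.2.2, zero_mul]
      rw [← Finset.sum_subset hsub hz]
      rw [Finset.sum_insert (by
            simp only [Finset.mem_insert, Finset.mem_singleton]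
            push_neg
            exact ⟨by omega, by omega⟩),
        Finset.sum_insert (by simp only [Finset.mem_singleton]; omega),
        Finset.sum_singleton]
      ring
    -- astar satisfies the constraints
    have hkey1 : astar (-(p:ℤ)) * (θ (i - (p:ℤ)) - θ i) + astar (p:ℤ) * (θ (i + (p:ℤ)) - θ i) = 0 := by
      rw [h1, h3]
      field_simp
      ring
    have hθ2' : θ2 = μ2 i - ξ := by linarith [hξ]
    have hδne' : (θ i - θ (i - (p:ℤ))) * (μ2 (i + (p:ℤ)) - μ2 i)
        - (θ (i + (p:ℤ)) - θ i) * (μ2 i - μ2 (i - (p:ℤ))) ≠ 0 := by rw [← hδ]; exact hδne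
    have hkey2 : astar (-(p:ℤ)) * (μ2 (i - (p:ℤ)) - μ2 i)
        + astar (p:ℤ) * (μ2 (i + (p:ℤ)) - μ2 i) = -ξ := by
      rw [h1, h3, hδ]
      field_simp
      ring
    have S0 : ∑ s ∈ Finset.Icc (-(p : ℤ)) (p:ℤ), astar s = 1 := by
      have h := hsum3 (fun _ => 1)
      simp only [mul_one] at h
      rw [h, h2]; ring
    have S1 : ∑ s ∈ Finset.Icc (-(p : ℤ)) (p:ℤ), astar s * θ (i + s) = θ i := by
      have h := hsum3 (fun s => θ (i + s))
      simp only [show i + -(p:ℤ) = i - (p:ℤ) from by ring, show i + (0:ℤ) = i from by ring] at h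
      rw [h, h2]
      linear_combination hkey1
    have S2 : ∑ s ∈ Finset.Icc (-(p : ℤ)) (p:ℤ), astar s * μ2 (i + s) = θ2 := by
      have h := hsum3 (fun s => μ2 (i + s))
      simp only [show i + -(p:ℤ) = i - (p:ℤ) from by ring, show i + (0:ℤ) = i from by ring] at h
      rw [h, h2, hθ2']
      linear_combination hkey2
    -- pointwise: |astar s| = astar s * f s
    have habs : ∀ s ∈ Finset.Icc (-(p : ℤ)) (p:ℤ), |astar s|
        = astar s * (1 - 2 * (((θ (i + (p:ℤ)) - θ (i - (p:ℤ))) * (μ2 (i + s) - μ2 i) - (μ2 (i + (p:ℤ)) - μ2 (i - (p:ℤ))) * (θ (i + s) - θ i)) / δ)) := by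
      intro s _
      by_cases ha : s = -(p:ℤ)
      · rw [ha, show i + -(p:ℤ) = i - (p:ℤ) from by ring, hnn, div_self hδne,
          abs_of_nonpos ha_np]
        ring
      · by_cases hb : s = (p:ℤ)
        · rw [hb, hnp, div_self hδne, abs_of_nonpos ha_p]
          ring
        · by_cases h0 : s = 0
          · rw [h0, show i + (0:ℤ) = i from by ring, abs_of_nonneg ha_0]
            norm_num
          · rw [h4 s ha h0 hb, abs_zero, zero_mul]
    have hstep1 : ∑ s ∈ Finset.Icc (-(p : ℤ)) (p:ℤ), |astar s|
        = ∑ s ∈ Finset.Icc (-(p : ℤ)) (p:ℤ), astar s * (1 - 2 * (((θ (i + (p:ℤ)) - θ (i - (p:ℤ))) * (μ2 (i + s) - μ2 i) - (μ2 (i + (p:ℤ)) - μ2 (i - (p:ℤ))) * (θ (i + s) - θ i)) / δ)) :=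
      Finset.sum_congr rfl habs
    -- expansion of the certificate sum
    have hexp : ∀ b : ℤ → ℝ, ∑ s ∈ Finset.Icc (-(p : ℤ)) (p:ℤ), b s * (1 - 2 * (((θ (i + (p:ℤ)) - θ (i - (p:ℤ))) * (μ2 (i + s) - μ2 i) - (μ2 (i + (p:ℤ)) - μ2 (i - (p:ℤ))) * (θ (i + s) - θ i)) / δ))
        = (1 + 2 * ((θ (i + (p:ℤ)) - θ (i - (p:ℤ))) * μ2 i - (μ2 (i + (p:ℤ)) - μ2 (i - (p:ℤ))) * θ i) / δ) * (∑ s ∈ Finset.Icc (-(p : ℤ)) (p:ℤ), b s)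
          + (2 * (μ2 (i + (p:ℤ)) - μ2 (i - (p:ℤ))) / δ) * (∑ s ∈ Finset.Icc (-(p : ℤ)) (p:ℤ), b s * θ (i + s))
          + (-2 * (θ (i + (p:ℤ)) - θ (i - (p:ℤ))) / δ) * (∑ s ∈ Finset.Icc (-(p : ℤ)) (p:ℤ), b s * μ2 (i + s)) := by
      intro b
      rw [Finset.mul_sum, Finset.mul_sum, Finset.mul_sum, ← Finset.sum_add_distrib,
        ← Finset.sum_add_distrib]
      refine Finset.sum_congr rfl fun s _ => ?_
      field_simp
      ring
    rw [hstep1, hexp astar, S0, S1, S2]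
    have h2' := hexp a
    rw [hc0, hc1, hc2] at h2'
    rw [← h2']
    apply Finset.sum_le_sum
    intro s hs
    obtain ⟨hk1, hk2⟩ := key s hs
    have hfb : |1 - 2 * (((θ (i + (p:ℤ)) - θ (i - (p:ℤ))) * (μ2 (i + s) - μ2 i) - (μ2 (i + (p:ℤ)) - μ2 (i - (p:ℤ))) * (θ (i + s) - θ i)) / δ)| ≤ 1 := by
      rw [abs_le]
      constructor
      · have := (div_le_one hpos).2 hk2
        linarith
      · have := div_nonneg hk1 hpos.le
        linarith
    calc a s * (1 - 2 * (((θ (i + (p:ℤ)) - θ (i - (p:ℤ))) * (μ2 (i + s) - μ2 i) - (μ2 (i + (p:ℤ)) - μ2 (i - (p:ℤ))) * (θ (i + s) - θ i)) / δ))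
        ≤ |a s * (1 - 2 * (((θ (i + (p:ℤ)) - θ (i - (p:ℤ))) * (μ2 (i + s) - μ2 i) - (μ2 (i + (p:ℤ)) - μ2 (i - (p:ℤ))) * (θ (i + s) - θ i)) / δ))| := le_abs_self _
      _ = |a s| * |1 - 2 * (((θ (i + (p:ℤ)) - θ (i - (p:ℤ))) * (μ2 (i + s) - μ2 i) - (μ2 (i + (p:ℤ)) - μ2 (i - (p:ℤ))) * (θ (i + s) - θ i)) / δ)| := abs_mul _ _
      _ ≤ |a s| * 1 := mul_le_mul_of_nonneg_left hfb (abs_nonneg _)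
      _ = |a s| := mul_one _
end

section
/- Let r ≥ 1 be a real number and let h_{i−1}, h_i > 0 be reals satisfying 1/r ≤ h_i/h_{i−1} ≤ r. Define a_i = −h_i² / (3 h_{i−1}(h_{i−1} + h_i)), b_i = (h_{i−1} + h_i)² / (3 h_{i−1} h_i), c_i = −h_{i−1}² / (3 h_i (h_{i−1} + h_i)). Then |a_i| ≤ r²/(3(1+r)), |c_i| ≤ r²/(3(1+r)), |b_i| ≤ (1+r)²/3, and hence |a_i| + |b_i| + |c_i| ≤ N(r) := (1/3)((1+r)² + 2r²/(1+r)). -/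
/-- Section 11 of the paper: if the local mesh ratio is bounded by `r`, then
the coefficients of the cubic quasi-interpolant `Q₃` satisfy
`|a| + |b| + |c| ≤ N(r) = (1/3)((1+r)² + 2r²/(1+r))`. -/
theorem stmt_16 (r : ℝ) (hr : 1 ≤ r) (hm hi : ℝ) (hhm : 0 < hm) (hhi : 0 < hi)
    (hratio1 : 1 / r ≤ hi / hm) (hratio2 : hi / hm ≤ r)
    (a b c : ℝ)
    (ha : a = -hi ^ 2 / (3 * hm * (hm + hi)))
    (hb : b = (hm + hi) ^ 2 / (3 * hm * hi))
    (hc : c = -hm ^ 2 / (3 * hi * (hm + hi))) :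
    |a| ≤ r ^ 2 / (3 * (1 + r)) ∧ |c| ≤ r ^ 2 / (3 * (1 + r)) ∧
    |b| ≤ (1 + r) ^ 2 / 3 ∧
    |a| + |b| + |c| ≤ (1 / 3) * ((1 + r) ^ 2 + 2 * r ^ 2 / (1 + r)) := by
  have hr0 : (0:ℝ) < r := lt_of_lt_of_le one_pos hr
  have hsum : 0 < hm + hi := by linarith
  have h1r : (0:ℝ) < 1 + r := by linarith
  have hir : hi ≤ r * hm := by
    have := (div_le_iff₀ hhm).mp hratio2
    linarith
  have hmr : hm ≤ r * hi := by
    have h := (div_le_div_iff₀ hr0 hhm).mp hratio1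
    nlinarith [h]
  have haa : |a| = hi ^ 2 / (3 * hm * (hm + hi)) := by
    rw [ha, abs_div, abs_neg, abs_of_nonneg (by positivity : (0:ℝ) ≤ hi ^ 2),
      abs_of_pos (by positivity : (0:ℝ) < 3 * hm * (hm + hi))]
  have hcc : |c| = hm ^ 2 / (3 * hi * (hm + hi)) := by
    rw [hc, abs_div, abs_neg, abs_of_nonneg (by positivity : (0:ℝ) ≤ hm ^ 2),
      abs_of_pos (by positivity : (0:ℝ) < 3 * hi * (hm + hi))]
  have hbb : |b| = (hm + hi) ^ 2 / (3 * hm * hi) := by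
    rw [hb, abs_of_pos (by positivity)]
  have hA : |a| ≤ r ^ 2 / (3 * (1 + r)) := by
    rw [haa, div_le_div_iff₀ (by positivity) (by positivity)]
    nlinarith [mul_le_mul_of_nonneg_left hir hr0.le, sq_nonneg (hi - r * hm), hhm.le, hhi.le]
  have hC : |c| ≤ r ^ 2 / (3 * (1 + r)) := by
    rw [hcc, div_le_div_iff₀ (by positivity) (by positivity)]
    nlinarith [mul_le_mul_of_nonneg_left hmr hr0.le, sq_nonneg (hm - r * hi), hhm.le, hhi.le]
  have hB : |b| ≤ (1 + r) ^ 2 / 3 := by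
    rw [hbb, div_le_div_iff₀ (by positivity) (by positivity)]
    nlinarith [mul_le_mul_of_nonneg_right hir hhm.le, mul_le_mul_of_nonneg_right hmr hhi.le,
      mul_pos hhm hhi, sq_nonneg (r - 1)]
  refine ⟨hA, hC, hB, ?_⟩
  have heq : (1 / 3 : ℝ) * ((1 + r) ^ 2 + 2 * r ^ 2 / (1 + r)) =
      r ^ 2 / (3 * (1 + r)) + (1 + r) ^ 2 / 3 + r ^ 2 / (3 * (1 + r)) := by
    field_simp
    ring
  rw [heq]
  linarith
end
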